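/- arXiv:2507.16402 — 6 statements merged into one kernel-verified Lean document; each statement's English description precedes it below -/
import Mathlib

section
/- Let n ≥ 1, let ω ∈ ℝⁿ be a vector with Euclidean norm |ω| = 1, and let H be a symmetric n×n real matrix. Then |Hω|² − (1/2)·(ω · Hω)² − (1/2)·|H|² ≤ 0. -/
open Matrix

/-- Lemma 3.5 of the paper.
For a unit vector `ω ∈ ℝⁿ` and a symmetric matrix `H`,
`|Hω|² − (1/2)(ω·Hω)² − (1/2)|H|² ≤ 0`, where `|H|` is the Frobenius norm. -/
theorem stmt_0 (n : ℕ) (hn : 1 ≤ n)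
    (ω : Fin n → ℝ) (hω : ∑ i, ω i ^ 2 = 1)
    (H : Matrix (Fin n) (Fin n) ℝ) (hH : H.IsSymm) :
    (∑ i, (H.mulVec ω i) ^ 2)
      - (1 / 2) * (∑ i, ω i * H.mulVec ω i) ^ 2
      - (1 / 2) * (∑ i, ∑ j, (H i j) ^ 2) ≤ 0 := by
  set v : Fin n → ℝ := H.mulVec ω with hvdef
  set L : ℝ := ∑ i, ω i * v i with hLdef
  have hsym : ∀ i j, H i j = H j i := fun i j => (Matrix.IsSymm.apply hH j i)
  have hv : ∀ i, v i = ∑ j, H i j * ω j := by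
    intro i; simp [hvdef, Matrix.mulVec, dotProduct]
  -- key identity
  have key : ∑ i, ∑ j, (H i j - v i * ω j - ω i * v j + L * ω i * ω j)^2
      = (∑ i, ∑ j, (H i j)^2) - 2 * (∑ i, v i ^ 2) + L^2 := by
    have expand : ∀ i j : Fin n, (H i j - v i * ω j - ω i * v j + L * ω i * ω j)^2 =
        (H i j)^2 - (2*v i)*(H i j * ω j) - (2*ω i)*(H i j * v j)
        + (2*L*ω i)*(H i j * ω j)
        + (v i^2)*(ω j^2) + (ω i^2)*(v j^2) + (L^2*ω i^2)*(ω j^2)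
        + (2*v i*ω i)*(ω j * v j) - (2*L*v i*ω i)*(ω j^2)
        - (2*L*ω i^2)*(ω j * v j) := by intros; ring
    have hL' : ∑ j, ω j * v j = L := hLdef.symm
    have inner : ∀ i : Fin n, ∑ j, (H i j - v i * ω j - ω i * v j + L * ω i * ω j)^2
        = (∑ j, (H i j)^2) - v i^2 - 2*(ω i * (∑ j, H i j * v j))
          + (2*L)*(ω i * v i) + (∑ j, v j^2)*(ω i^2) - L^2*(ω i^2) := by
      intro i
      simp only [expand]
      simp only [Finset.sum_sub_distrib, Finset.sum_add_distrib, ← Finset.mul_sum, ← hv, hω,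
        mul_one, hL']
      ring
    have hcross : ∑ i, ω i * (∑ j, H i j * v j) = ∑ j, v j ^ 2 := by
      calc ∑ i, ω i * (∑ j, H i j * v j) = ∑ i, ∑ j, ω i * (H i j * v j) := by
            simp [Finset.mul_sum]
        _ = ∑ j, ∑ i, ω i * (H i j * v j) := Finset.sum_comm
        _ = ∑ j, v j * (∑ i, H j i * ω i) := by
            refine Finset.sum_congr rfl fun j _ => ?_
            rw [Finset.mul_sum]
            exact Finset.sum_congr rfl fun i _ => by rw [hsym i j]; ring
        _ = ∑ j, v j ^ 2 := Finset.sum_congr rfl fun j _ => by rw [← hv]; ring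
    simp only [inner]
    simp only [Finset.sum_sub_distrib, Finset.sum_add_distrib, ← Finset.mul_sum,
      ← Finset.sum_mul, hcross, hL', hω, mul_one]
    ring
  have sq_nonneg : 0 ≤ ∑ i, ∑ j, (H i j - v i * ω j - ω i * v j + L * ω i * ω j)^2 :=
    Finset.sum_nonneg fun i _ => Finset.sum_nonneg fun j _ => sq_nonneg _
  rw [key] at sq_nonneg
  have : (∑ i, ω i * v i) = L := rfl
  nlinarith [sq_nonneg]
end

section
/- Let α ∈ [0,1) and i ∈ (−1, 0]. Set C := min{1 − α, 1 + α·i, (1 + i)·(1 − α)}. Then C > 0, and for every n ≥ 1, every symmetric n×n real matrix H, every ω ∈ ℝⁿ with |ω| = 1, every real number θ with θ ≥ i, and every s ∈ [0,1], one has |H|² + (θ − α)·s·|Hω|² − α·θ·s²·(Hω · ω)² ≥ C·|H|². -/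
open Matrix

section StmtAux

variable {n : ℕ}

private lemma stmt1_mulVec_apply (H : Matrix (Fin n) (Fin n) ℝ) (ω : Fin n → ℝ) (k : Fin n) :
    H.mulVec ω k = ∑ l, H k l * ω l := by
  simp [Matrix.mulVec, dotProduct]

private lemma stmt1_helper1 (H : Matrix (Fin n) (Fin n) ℝ) (ω : Fin n → ℝ) (f : Fin n → ℝ) :
    ∑ k, ∑ l, H k l * (f k * ω l) = ∑ k, f k * H.mulVec ω k := by
  refine Finset.sum_congr rfl fun k _ => ?_
  rw [stmt1_mulVec_apply, Finset.mul_sum]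
  exact Finset.sum_congr rfl fun l _ => by ring

private lemma stmt1_T1 (H : Matrix (Fin n) (Fin n) ℝ) (ω : Fin n → ℝ) (hH : H.IsSymm) :
    ∑ k, ∑ l, H k l * (ω k * H.mulVec ω l) = ∑ k, (H.mulVec ω k) ^ 2 := by
  rw [Finset.sum_comm]
  have h : ∀ l k, H k l * (ω k * H.mulVec ω l) = H l k * (H.mulVec ω l * ω k) := by
    intro l k; rw [hH.apply l k]; ring
  simp_rw [h]
  rw [stmt1_helper1 H ω (H.mulVec ω)]
  exact Finset.sum_congr rfl fun k _ => by ring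

/-- For symmetric `H` and a unit vector `ω`: `2|Hω|² ≤ |H|² + (Hω·ω)²`. -/
private lemma stmt1_lemA (H : Matrix (Fin n) (Fin n) ℝ) (hH : H.IsSymm) (ω : Fin n → ℝ)
    (hω : (∑ k, ω k ^ 2) = 1) :
    2 * (∑ k, (H.mulVec ω k) ^ 2)
      ≤ (∑ k, ∑ l, (H k l) ^ 2) + (∑ k, (H.mulVec ω k) * ω k) ^ 2 := by
  set u := H.mulVec ω with hu
  set L := ∑ k, u k * ω k with hL
  set Y := ∑ k, u k ^ 2 with hY
  set X := ∑ k, ∑ l, (H k l) ^ 2 with hX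
  have h0 : (0:ℝ) ≤ ∑ k, ∑ l,
      (H k l - ω k * u l - u k * ω l + L * (ω k * ω l)) ^ 2 :=
    Finset.sum_nonneg fun k _ => Finset.sum_nonneg fun l _ => sq_nonneg _
  have pt : ∀ k l, (H k l - ω k * u l - u k * ω l + L * (ω k * ω l)) ^ 2
      = H k l ^ 2 + ω k ^ 2 * u l ^ 2 + u k ^ 2 * ω l ^ 2 + L ^ 2 * (ω k ^ 2 * ω l ^ 2)
        - 2 * (H k l * (ω k * u l)) - 2 * (H k l * (u k * ω l))
        + 2 * (L * (H k l * (ω k * ω l)))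
        + 2 * ((ω k * u k) * (u l * ω l)) - 2 * (L * (ω k ^ 2 * (u l * ω l)))
        - 2 * (L * ((u k * ω k) * ω l ^ 2)) := fun k l => by ring
  rw [Finset.sum_congr rfl fun k _ => Finset.sum_congr rfl fun l _ => pt k l] at h0
  simp only [Finset.sum_add_distrib, Finset.sum_sub_distrib, ← Finset.mul_sum,
    ← Finset.sum_mul] at h0
  rw [hω] at h0
  rw [stmt1_T1 H ω hH] at h0
  rw [stmt1_helper1 H ω u, stmt1_helper1 H ω ω] at h0
  have e1 : ∑ k, u k * u k = Y := Finset.sum_congr rfl fun k _ => by ring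
  have e2 : ∑ k, ω k * u k = L := Finset.sum_congr rfl fun k _ => by ring
  have e3 : ∑ l, u l * ω l = L := rfl
  rw [e1, e2, e3] at h0
  nlinarith [h0]

/-- Cauchy–Schwarz: `(Hω·ω)² ≤ |Hω|²` for a unit vector `ω`. -/
private lemma stmt1_CS (H : Matrix (Fin n) (Fin n) ℝ) (ω : Fin n → ℝ)
    (hω : (∑ k, ω k ^ 2) = 1) :
    (∑ k, (H.mulVec ω k) * ω k) ^ 2 ≤ ∑ k, (H.mulVec ω k) ^ 2 := by
  set u := H.mulVec ω with hu
  set L := ∑ k, u k * ω k with hL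
  have h0 : (0:ℝ) ≤ ∑ k, (u k - L * ω k) ^ 2 :=
    Finset.sum_nonneg fun k _ => sq_nonneg _
  have pt : ∀ k, (u k - L * ω k) ^ 2
      = u k ^ 2 - 2 * (L * (u k * ω k)) + L ^ 2 * ω k ^ 2 := fun k => by ring
  rw [Finset.sum_congr rfl fun k _ => pt k] at h0
  simp only [Finset.sum_add_distrib, Finset.sum_sub_distrib, ← Finset.mul_sum] at h0
  rw [hω] at h0
  nlinarith [h0]

set_option maxHeartbeats 1000000 in
private lemma stmt1_key_real (α i θ s X Y L : ℝ) (hα0 : 0 ≤ α) (hα1 : α < 1)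
    (hi0 : -1 < i) (hi1 : i ≤ 0) (hθ : i ≤ θ) (hs0 : 0 ≤ s) (hs1 : s ≤ 1)
    (hL : L ^ 2 ≤ Y) (hsym : 2 * Y ≤ X + L ^ 2) :
    min (1 - α) (min (1 + α * i) ((1 + i) * (1 - α))) * X
      ≤ X + (θ - α) * s * Y - α * θ * s ^ 2 * L ^ 2 := by
  have hY : 0 ≤ Y := le_trans (sq_nonneg L) hL
  have hX : 0 ≤ X := by nlinarith
  have h1mas : 0 ≤ 1 - α * s := by nlinarith
  have hc : 0 ≤ s * Y - α * s ^ 2 * L ^ 2 := by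
    nlinarith [mul_nonneg hs0 (sub_nonneg.2 hL), mul_nonneg (mul_nonneg hs0 (sq_nonneg L)) h1mas]
  have hθred : X + (i - α) * s * Y - α * i * s ^ 2 * L ^ 2
      ≤ X + (θ - α) * s * Y - α * θ * s ^ 2 * L ^ 2 := by
    nlinarith [mul_nonneg (sub_nonneg.2 hθ) hc]
  set C := min (1 - α) (min (1 + α * i) ((1 + i) * (1 - α))) with hC
  set ca : ℝ := (i - α) * s - α * i * s ^ 2 with hca
  set cb : ℝ := (i - α) * s with hcb
  set m : ℝ := min 0 (min ca (cb / 2)) with hm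
  have hm0 : m ≤ 0 := min_le_left _ _
  have hmca : m ≤ ca := le_trans (min_le_right _ _) (min_le_left _ _)
  have hmcb2 : m ≤ cb / 2 := le_trans (min_le_right _ _) (min_le_right _ _)
  have hmcb : 2 * m ≤ cb := by linarith
  have hb : (0:ℝ) ≤ Y - L ^ 2 := sub_nonneg.2 hL
  have hE : X + m * X ≤ X + (i - α) * s * Y - α * i * s ^ 2 * L ^ 2 := by
    have h1 : m * L ^ 2 ≤ ca * L ^ 2 := mul_le_mul_of_nonneg_right hmca (sq_nonneg L)
    have h2 : (2 * m) * (Y - L ^ 2) ≤ cb * (Y - L ^ 2) := mul_le_mul_of_nonneg_right hmcb hb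
    have h3 : m * X ≤ m * (L ^ 2 + 2 * (Y - L ^ 2)) :=
      mul_le_mul_of_nonpos_left (by linarith) hm0
    have heq : X + (i - α) * s * Y - α * i * s ^ 2 * L ^ 2
        = X + ca * L ^ 2 + cb * (Y - L ^ 2) := by rw [hca, hcb]; ring
    rw [heq]; linarith
  have hαi : α * i ≤ 0 := mul_nonpos_of_nonneg_of_nonpos hα0 hi1
  have hCle1 : C ≤ 1 - α := min_le_left _ _
  have hCle2 : C ≤ 1 + α * i := le_trans (min_le_right _ _) (min_le_left _ _)
  have hCle3 : C ≤ (1 + i) * (1 - α) := le_trans (min_le_right _ _) (min_le_right _ _)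
  have f0 : C - 1 ≤ 0 := by linarith
  have fcb : C - 1 ≤ cb / 2 := by
    have haux : i - α - α * i ≤ (i - α) * s / 2 := by
      nlinarith [mul_nonneg (sub_nonneg.2 hs1) (by linarith : (0:ℝ) ≤ α - i),
        mul_nonneg (by linarith : (0:ℝ) ≤ 1 + i) hα0,
        mul_nonneg (by linarith : (0:ℝ) ≤ -i) (by linarith : (0:ℝ) ≤ 1 - α)]
    rw [hcb]; nlinarith [hCle3, haux]
  have fca : C - 1 ≤ ca := by
    rcases le_or_gt 0 (α - i + 2 * (α * i)) with h | h
    · have hin : 0 ≤ (α - i) + α * i * (s + 1) := by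
        nlinarith [mul_nonneg (sub_nonneg.2 hs1) (neg_nonneg.2 hαi)]
      have haux : i - α - α * i ≤ (i - α) * s - α * i * s ^ 2 := by
        nlinarith [mul_nonneg (sub_nonneg.2 hs1) hin]
      rw [hca]; nlinarith [hCle3, haux]
    · have hA : 0 < -(α * i) := by nlinarith
      have h2 : 0 ≤ α - i - 2 * (α * i) := by
        nlinarith [mul_nonneg hα0 (neg_nonneg.2 hi1)]
      have hprod : 0 ≤ (α - i - 2 * (α * i)) * (-(α - i + 2 * (α * i))) :=
        mul_nonneg h2 (by linarith)
      have haux : α * i ≤ (i - α) * s - α * i * s ^ 2 := by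
        nlinarith [sq_nonneg (2 * (α * i) * s - (i - α)), hprod, hA]
      rw [hca]; linarith [hCle2, haux]
  have hCm : C ≤ 1 + m := by
    have : C - 1 ≤ m := le_min f0 (le_min fca fcb)
    linarith
  have hfin : C * X ≤ (1 + m) * X := mul_le_mul_of_nonneg_right hCm hX
  nlinarith [hfin, hE, hθred]

end StmtAux

/-- pointwise coercivity inequality, algebraic core of Theorem 4.1.
For `α ∈ [0,1)`, `i ∈ (−1,0]`, `C := min{1−α, 1+αi, (1+i)(1−α)}`, one has `C > 0` and
for every symmetric `H`, unit vector `ω`, `θ ≥ i` and `s ∈ [0,1]`: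
`|H|² + (θ−α)s|Hω|² − αθs²(Hω·ω)² ≥ C|H|²`. -/
theorem stmt_1 (α i : ℝ) (hα : α ∈ Set.Ico (0:ℝ) 1) (hi : i ∈ Set.Ioc (-1:ℝ) 0) :
    0 < min (1 - α) (min (1 + α * i) ((1 + i) * (1 - α))) ∧
    ∀ (n : ℕ), 1 ≤ n →
    ∀ (H : Matrix (Fin n) (Fin n) ℝ), H.IsSymm →
    ∀ (ω : Fin n → ℝ), (∑ k, ω k ^ 2) = 1 →
    ∀ (θ : ℝ), i ≤ θ →
    ∀ (s : ℝ), s ∈ Set.Icc (0:ℝ) 1 →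
      min (1 - α) (min (1 + α * i) ((1 + i) * (1 - α))) * (∑ k, ∑ l, (H k l) ^ 2)
        ≤ (∑ k, ∑ l, (H k l) ^ 2)
          + (θ - α) * s * (∑ k, (H.mulVec ω k) ^ 2)
          - α * θ * s ^ 2 * (∑ k, (H.mulVec ω k) * ω k) ^ 2 := by
  obtain ⟨hα0, hα1⟩ := hα
  obtain ⟨hi0, hi1⟩ := hi
  constructor
  · refine lt_min (by linarith) (lt_min ?_ ?_)
    · nlinarith [mul_nonneg hα0 (by linarith : (0:ℝ) ≤ i + 1)]
    · exact mul_pos (by linarith) (by linarith)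
  · intro n _hn H hH ω hω θ hθ s hs
    exact stmt1_key_real α i θ s _ _ _ hα0 hα1 hi0 hi1 hθ hs.1 hs.2
      (stmt1_CS H ω hω) (stmt1_lemA H hH ω hω)
end

section
/- For every t ≥ 0: B̃(b(t)) ≤ (1 + s_a)·B(t), where B̃ is the Young conjugate of B. -/
/-- The Young conjugate `B̃(r) = sup_{ρ ≥ 0} (r·ρ − B(ρ))`, with values in the extended
reals so that no finiteness assumption is needed. -/
noncomputable def youngConjugate (B : ℝ → ℝ) (r : ℝ) : EReal :=
  ⨆ ρ : {ρ : ℝ // 0 ≤ ρ}, ((r * (ρ : ℝ) - B (ρ : ℝ) : ℝ) : EReal)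

/-!
The derivative `b' = a + τ a'` is at least `(1 + i_a) a > 0`, so `b` is nondecreasing and the
supremum defining `B̃(b t)` is attained at `ρ = t`: `B̃(b t) = t b(t) - B(t)`. Moreover
`τ b'(τ) = b(τ) + τ² a'(τ) ≤ (1 + s_a) b(τ)`, so `x ↦ x b(x) - (2 + s_a) B(x)` is nonincreasing
on `(0, ∞)` and at most `ε b(ε)` at `ε`; letting `ε → 0` gives `t b(t) ≤ (2 + s_a) B(t)`.
-/

open Set Filter Topology intervalIntegral

theorem MonotoneOn.mul_sub_le_intervalIntegral {f : ℝ → ℝ} {t ρ : ℝ}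
    (hf : MonotoneOn f (uIcc t ρ)) : f t * (ρ - t) ≤ ∫ x in t..ρ, f x := by
  have hint : IntervalIntegrable f MeasureTheory.volume t ρ := hf.intervalIntegrable
  rcases le_total t ρ with htρ | hρt
  · rw [uIcc_of_le htρ] at hf
    have := integral_mono_on htρ intervalIntegrable_const hint
      fun x hx => hf ⟨le_rfl, htρ⟩ hx hx.1
    simpa [mul_comm] using this
  · rw [uIcc_of_ge hρt] at hf
    have := integral_mono_on hρt hint.symm intervalIntegrable_const
      fun x hx => hf hx ⟨hρt, le_rfl⟩ hx.2
    rw [integral_const, smul_eq_mul] at this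
    rw [integral_symm]
    linarith

section Primitive

variable {b : ℝ → ℝ}

/-- Young's equality: the supremum is attained at `ρ = t`. -/
theorem youngConjugate_intervalIntegral_le (hb : MonotoneOn b (Ici 0)) {t : ℝ} (ht : 0 ≤ t) :
    youngConjugate (fun x => ∫ τ in 0..x, b τ) (b t) ≤
      ((t * b t - ∫ τ in 0..t, b τ : ℝ) : EReal) := by
  refine iSup_le fun ⟨ρ, hρ⟩ => EReal.coe_le_coe_iff.2 ?_
  have hsub := integral_interval_sub_left (μ := MeasureTheory.volume)
    (hb.mono (ordConnected_Ici.uIcc_subset self_mem_Ici hρ)).intervalIntegrable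
    (hb.mono (ordConnected_Ici.uIcc_subset self_mem_Ici ht)).intervalIntegrable
  have := (hb.mono (ordConnected_Ici.uIcc_subset ht hρ)).mul_sub_le_intervalIntegral
  dsimp only
  linarith

theorem monotoneOn_Ici_of_hasDerivAt_nonneg {b' : ℝ → ℝ}
    (hderiv : ∀ τ, 0 < τ → HasDerivAt b (b' τ) τ) (hb' : ∀ τ, 0 < τ → 0 ≤ b' τ)
    (hb0 : ∀ τ, 0 < τ → b 0 ≤ b τ) : MonotoneOn b (Ici 0) := by
  have hIoi : MonotoneOn b (Ioi 0) :=
    monotoneOn_of_hasDerivWithinAt_nonneg (convex_Ioi 0)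
      (fun τ hτ => (hderiv τ hτ).continuousAt.continuousWithinAt)
      (fun τ hτ => (hderiv τ (by simpa using hτ)).hasDerivWithinAt)
      (fun τ hτ => hb' τ (by simpa using hτ))
  intro x hx y hy hxy
  rcases (mem_Ici.1 hx).eq_or_lt with rfl | hx
  · rcases (mem_Ici.1 hy).eq_or_lt with rfl | hy
    · exact le_rfl
    · exact hb0 y hy
  · exact hIoi hx (hx.trans_le hxy) hxy

variable {b' : ℝ → ℝ} {c : ℝ}

theorem antitoneOn_mul_sub_intervalIntegral (hb : MonotoneOn b (Ici 0))
    (hderiv : ∀ τ, 0 < τ → HasDerivAt b (b' τ) τ)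
    (hgrowth : ∀ τ, 0 < τ → τ * b' τ ≤ c * b τ) :
    AntitoneOn (fun x => x * b x - (1 + c) * ∫ τ in 0..x, b τ) (Ioi 0) := by
  have hcont : ContinuousOn b (Ioi 0) := fun τ hτ =>
    (hderiv τ hτ).continuousAt.continuousWithinAt
  have hg : ∀ τ, 0 < τ → HasDerivAt (fun x => x * b x - (1 + c) * ∫ τ in 0..x, b τ)
      (1 * b τ + τ * b' τ - (1 + c) * b τ) τ := fun τ hτ =>
    ((hasDerivAt_id τ).mul (hderiv τ hτ)).sub <| HasDerivAt.const_mul _ <|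
      integral_hasDerivAt_right
        (hb.mono (ordConnected_Ici.uIcc_subset self_mem_Ici hτ.le)).intervalIntegrable
        (hcont.stronglyMeasurableAtFilter isOpen_Ioi τ hτ) (hderiv τ hτ).continuousAt
  refine antitoneOn_of_hasDerivWithinAt_nonpos (convex_Ioi 0)
    (fun τ hτ => (hg τ hτ).continuousAt.continuousWithinAt)
    (fun τ hτ => (hg τ (by simpa using hτ)).hasDerivWithinAt) fun τ hτ => ?_
  linarith [hgrowth τ (by simpa using hτ)]

/-- `b` need not be continuous at `0`, so the monotonicity on `(0, ∞)` is applied on `[ε, t]`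
and `ε → 0`. -/
theorem mul_le_intervalIntegral_of_mul_deriv_le (hc : -1 ≤ c) (hb : MonotoneOn b (Ici 0))
    (hb0 : 0 ≤ b 0) (hderiv : ∀ τ, 0 < τ → HasDerivAt b (b' τ) τ)
    (hgrowth : ∀ τ, 0 < τ → τ * b' τ ≤ c * b τ) {t : ℝ} (ht : 0 ≤ t) :
    t * b t ≤ (1 + c) * ∫ τ in 0..t, b τ := by
  rcases ht.eq_or_lt with rfl | ht
  · simp
  have hbound : ∀ ε ∈ Ioo 0 t, t * b t - (1 + c) * ∫ τ in 0..t, b τ ≤ ε * b t := by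
    rintro ε ⟨hε, hεt⟩
    have hanti := antitoneOn_mul_sub_intervalIntegral hb hderiv hgrowth hε ht hεt.le
    have hint : 0 ≤ ∫ τ in 0..ε, b τ :=
      integral_nonneg hε.le fun x hx => hb0.trans (hb self_mem_Ici hx.1 hx.1)
    have hbε : ε * b ε ≤ ε * b t := mul_le_mul_of_nonneg_left (hb hε.le ht.le hεt.le) hε.le
    dsimp only at hanti
    nlinarith
  have hlim : Tendsto (fun ε => ε * b t) (𝓝[>] 0) (𝓝 0) := by
    simpa using tendsto_nhdsWithin_of_tendsto_nhds (f := fun ε : ℝ => ε * b t) (a := 0)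
      (s := Ioi 0) ((continuous_mul_const (b t)).tendsto 0)
  linarith [ge_of_tendsto hlim (eventually_of_mem (Ioo_mem_nhdsGT ht) hbound)]

end Primitive

theorem stmt_7_general (a a' : ℝ → ℝ) (iA sA : ℝ)
    (hiA : -1 < iA) (hias : iA ≤ sA)
    (ha_pos : ∀ t, 0 < t → 0 < a t)
    (ha_deriv : ∀ t, 0 < t → HasDerivAt a (a' t) t)
    (hbound : ∀ t, 0 < t → iA ≤ t * a' t / a t ∧ t * a' t / a t ≤ sA)
    (b : ℝ → ℝ) (hb0 : b 0 = 0) (hb : ∀ t, 0 < t → b t = a t * t)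
    (B : ℝ → ℝ) (hB : ∀ t, B t = ∫ τ in (0:ℝ)..t, b τ) :
    ∀ t, 0 ≤ t → youngConjugate B (b t) ≤ (((1 + sA) * B t : ℝ) : EReal) := by
  have hderiv : ∀ τ, 0 < τ → HasDerivAt b (a τ + τ * a' τ) τ := fun τ hτ =>
    (((ha_deriv τ hτ).mul (hasDerivAt_id τ)).congr_of_eventuallyEq
      (eventually_of_mem (Ioi_mem_nhds hτ) hb)).congr_deriv (by simp; ring)
  have hlower : ∀ τ, 0 < τ → iA * a τ ≤ τ * a' τ := fun τ hτ =>
    (le_div_iff₀ (ha_pos τ hτ)).1 (hbound τ hτ).1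
  have hupper : ∀ τ, 0 < τ → τ * a' τ ≤ sA * a τ := fun τ hτ =>
    (div_le_iff₀ (ha_pos τ hτ)).1 (hbound τ hτ).2
  have hmono : MonotoneOn b (Ici 0) := monotoneOn_Ici_of_hasDerivAt_nonneg hderiv
    (fun τ hτ => by nlinarith [hlower τ hτ, ha_pos τ hτ])
    (fun τ hτ => by rw [hb0, hb τ hτ]; exact (mul_pos (ha_pos τ hτ) hτ).le)
  have hgrowth : ∀ τ, 0 < τ → τ * (a τ + τ * a' τ) ≤ (1 + sA) * b τ := fun τ hτ => by
    rw [hb τ hτ]; nlinarith [hupper τ hτ]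
  obtain rfl : B = fun x => ∫ τ in 0..x, b τ := funext hB
  intro t ht
  calc youngConjugate _ (b t) ≤ ((t * b t - ∫ τ in 0..t, b τ : ℝ) : EReal) :=
        youngConjugate_intervalIntegral_le hmono ht
    _ ≤ _ := EReal.coe_le_coe_iff.2 <| by
        linarith [mul_le_intervalIntegral_of_mul_deriv_le (by linarith) hmono hb0.ge hderiv
          hgrowth ht]

/-- inequality (2.2) of the paper, with explicit constant.
For every `t ≥ 0`: `B̃(b(t)) ≤ (1+s_a)·B(t)`. -/
theorem stmt_7 (a a' : ℝ → ℝ) (iA sA : ℝ)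
    (hiA : -1 < iA) (hias : iA ≤ sA)
    (ha_pos : ∀ t, 0 < t → 0 < a t)
    (ha_deriv : ∀ t, 0 < t → HasDerivAt a (a' t) t)
    (ha'_cont : ContinuousOn a' (Set.Ioi 0))
    (hbound : ∀ t, 0 < t → iA ≤ t * a' t / a t ∧ t * a' t / a t ≤ sA)
    (b : ℝ → ℝ) (hb0 : b 0 = 0) (hb : ∀ t, 0 < t → b t = a t * t)
    (B : ℝ → ℝ) (hB : ∀ t, B t = ∫ τ in (0:ℝ)..t, b τ) :
    ∀ t, 0 ≤ t → youngConjugate B (b t) ≤ (((1 + sA) * B t : ℝ) : EReal) :=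
  stmt_7_general a a' iA sA hiA hias ha_pos ha_deriv hbound b hb0 hb B hB
end

section
/- The Young conjugate B̃ of B satisfies B̃(r) < ∞ for every r ≥ 0, and for every r ≥ 0 and every λ ≥ 1: B̃(λ·r) ≤ λ^{(2+i_a)/(1+i_a)}·B̃(r). In particular, B̃ satisfies the Δ₂-condition: there is a constant C > 1 depending only on i_a such that B̃(2r) ≤ C·B̃(r) for all r ≥ 0. -/
/-- part of Proposition 2.3 of the paper.
The Young conjugate `B̃` is finite-valued on `[0,∞)`, satisfies
`B̃(λr) ≤ λ^{(2+i_a)/(1+i_a)} B̃(r)` for `r ≥ 0`, `λ ≥ 1`, and in particular the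
Δ₂-condition `B̃(2r) ≤ C·B̃(r)` for some constant `C > 1` depending only on `i_a`. -/
theorem stmt_8 (a a' : ℝ → ℝ) (iA sA : ℝ)
    (hiA : -1 < iA) (hias : iA ≤ sA)
    (ha_pos : ∀ t, 0 < t → 0 < a t)
    (ha_deriv : ∀ t, 0 < t → HasDerivAt a (a' t) t)
    (ha'_cont : ContinuousOn a' (Set.Ioi 0))
    (hbound : ∀ t, 0 < t → iA ≤ t * a' t / a t ∧ t * a' t / a t ≤ sA)
    (b : ℝ → ℝ) (hb0 : b 0 = 0) (hb : ∀ t, 0 < t → b t = a t * t)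
    (B : ℝ → ℝ) (hB : ∀ t, B t = ∫ τ in (0:ℝ)..t, b τ) :
    (∀ r : ℝ, 0 ≤ r → youngConjugate B r < ⊤) ∧
    (∀ r : ℝ, 0 ≤ r → ∀ l : ℝ, 1 ≤ l →
      youngConjugate B (l * r) ≤ ((l ^ ((2 + iA) / (1 + iA)) : ℝ) : EReal) * youngConjugate B r) ∧
    (∃ C : ℝ, 1 < C ∧ ∀ r : ℝ, 0 ≤ r →
      youngConjugate B (2 * r) ≤ ((C : ℝ) : EReal) * youngConjugate B r) := by
  have h1iA : (0:ℝ) < 1 + iA := by linarith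
  -- pointwise bound `iA * a t ≤ t * a' t`
  have hiAa : ∀ t, 0 < t → iA * a t ≤ t * a' t := fun t ht =>
    (le_div_iff₀ (ha_pos t ht)).mp (hbound t ht).1
  -- `log (a t) - iA * log t` is monotone on `(0, ∞)`
  have hg : MonotoneOn (fun t => Real.log (a t) - iA * Real.log t) (Set.Ioi 0) := by
    have hder : ∀ t ∈ Set.Ioi (0:ℝ),
        HasDerivAt (fun t => Real.log (a t) - iA * Real.log t) (a' t / a t - iA * t⁻¹) t := by
      intro t ht
      have h1 : HasDerivAt (fun t => Real.log (a t)) (a' t / a t) t :=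
        (ha_deriv t ht).log (ne_of_gt (ha_pos t ht))
      have h2 : HasDerivAt (fun t => iA * Real.log t) (iA * t⁻¹) t :=
        (Real.hasDerivAt_log (ne_of_gt ht)).const_mul iA
      exact h1.sub h2
    apply monotoneOn_of_deriv_nonneg (convex_Ioi 0)
    · exact fun t ht => ((hder t ht).continuousAt).continuousWithinAt
    · intro t ht
      rw [interior_Ioi] at ht
      exact ((hder t ht).differentiableAt).differentiableWithinAt
    · intro t ht
      rw [interior_Ioi] at ht
      rw [(hder t ht).deriv]
      have ht0 : (0:ℝ) < t := ht
      have ha0 := ha_pos t ht0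
      have h := hiAa t ht0
      rw [sub_nonneg]
      rw [mul_inv_le_iff₀ ht0, div_mul_eq_mul_div, le_div_iff₀ ha0]
      nlinarith
  -- scaling inequality for `a`
  have ha_scale : ∀ μ, 1 ≤ μ → ∀ τ, 0 < τ → μ ^ iA * a τ ≤ a (μ * τ) := by
    intro μ hμ τ hτ
    have hμ0 : (0:ℝ) < μ := lt_of_lt_of_le one_pos hμ
    have hμτ : (0:ℝ) < μ * τ := mul_pos hμ0 hτ
    have hle : τ ≤ μ * τ := le_mul_of_one_le_left hτ.le hμ
    have h := hg hτ hμτ hle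
    simp only at h
    have hlog : Real.log (μ * τ) = Real.log μ + Real.log τ :=
      Real.log_mul (ne_of_gt hμ0) (ne_of_gt hτ)
    -- from h: log a τ - iA log τ ≤ log a (μτ) - iA (log μ + log τ)
    have key : iA * Real.log μ + Real.log (a τ) ≤ Real.log (a (μ * τ)) := by
      rw [hlog] at h; linarith
    have := Real.exp_le_exp.mpr key
    rw [Real.exp_add, Real.exp_log (ha_pos τ hτ), Real.exp_log (ha_pos _ hμτ)] at this
    rwa [Real.rpow_def_of_pos hμ0, mul_comm (Real.log μ) iA]
  have hb_pos : ∀ τ, 0 < τ → 0 < b τ := fun τ hτ => by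
    rw [hb τ hτ]; exact mul_pos (ha_pos τ hτ) hτ
  have hb_nonneg : ∀ τ, 0 ≤ τ → 0 ≤ b τ := by
    intro τ hτ
    rcases eq_or_lt_of_le hτ with h | h
    · rw [← h, hb0]
    · exact (hb_pos τ h).le
  -- b is monotone on [0,∞)
  have hb_deriv : ∀ t, 0 < t → HasDerivAt b (a' t * t + a t) t := by
    intro t ht
    have h1 : HasDerivAt (fun s => a s * s) (a' t * t + a t * 1) t :=
      (ha_deriv t ht).mul (hasDerivAt_id t)
    have heq : b =ᶠ[nhds t] fun s => a s * s := by
      filter_upwards [isOpen_Ioi.mem_nhds (show t ∈ Set.Ioi (0:ℝ) from ht)] with s hs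
      exact hb s hs
    have := h1.congr_of_eventuallyEq heq
    simpa using this
  have hb_mono_Ioi : MonotoneOn b (Set.Ioi 0) := by
    apply monotoneOn_of_deriv_nonneg (convex_Ioi 0)
    · exact fun t ht => ((hb_deriv t ht).continuousAt).continuousWithinAt
    · intro t ht
      rw [interior_Ioi] at ht
      exact ((hb_deriv t ht).differentiableAt).differentiableWithinAt
    · intro t ht
      rw [interior_Ioi] at ht
      rw [(hb_deriv t ht).deriv]
      have ht0 : (0:ℝ) < t := ht
      have := hiAa t ht0
      have ha0 := ha_pos t ht0
      nlinarith
  have hb_mono : MonotoneOn b (Set.Ici 0) := by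
    intro x hx y hy hxy
    rcases eq_or_lt_of_le (show (0:ℝ) ≤ x from hx) with h | h
    · rw [← h, hb0]
      exact hb_nonneg y hy
    · exact hb_mono_Ioi h (lt_of_lt_of_le h hxy) hxy
  -- integrability
  have hbi : ∀ t : ℝ, 0 ≤ t → IntervalIntegrable b MeasureTheory.volume 0 t := by
    intro t ht
    apply MonotoneOn.intervalIntegrable
    apply hb_mono.mono
    rw [Set.uIcc_of_le ht]
    exact fun x hx => hx.1
  have hB0 : B 0 = 0 := by rw [hB]; simp
  have hB_nonneg : ∀ t, 0 ≤ t → 0 ≤ B t := by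
    intro t ht
    rw [hB]
    exact intervalIntegral.integral_nonneg ht (fun x hx => hb_nonneg x hx.1)
  -- scaling inequality for b
  have hb_scale : ∀ μ, 1 ≤ μ → ∀ τ, 0 ≤ τ → μ ^ ((1:ℝ)+iA) * b τ ≤ b (μ * τ) := by
    intro μ hμ τ hτ
    have hμ0 : (0:ℝ) < μ := lt_of_lt_of_le one_pos hμ
    rcases eq_or_lt_of_le hτ with h | h
    · rw [← h, mul_zero, hb0, mul_zero]
    · have hμτ : (0:ℝ) < μ * τ := mul_pos hμ0 h
      rw [hb τ h, hb (μ * τ) hμτ]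
      have hexp : μ ^ ((1:ℝ)+iA) = μ * μ ^ iA := by
        rw [Real.rpow_add hμ0, Real.rpow_one]
      rw [hexp]
      have := ha_scale μ hμ τ h
      nlinarith [ha_pos τ h, Real.rpow_pos_of_pos hμ0 iA]
  -- scaling inequality for B
  have hB_scale : ∀ μ, 1 ≤ μ → ∀ t, 0 ≤ t → μ ^ ((2:ℝ)+iA) * B t ≤ B (μ * t) := by
    intro μ hμ t ht
    have hμ0 : (0:ℝ) < μ := lt_of_lt_of_le one_pos hμ
    have hμt : 0 ≤ μ * t := mul_nonneg hμ0.le ht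
    have hsub : B (μ * t) = μ * ∫ x in (0:ℝ)..t, b (μ * x) := by
      rw [hB]
      rw [show μ * ∫ x in (0:ℝ)..t, b (μ * x) = μ • ∫ x in (0:ℝ)..t, b (μ * x) from rfl]
      rw [intervalIntegral.smul_integral_comp_mul_left b μ, mul_zero]
    have hint1 : IntervalIntegrable (fun x => b (μ * x)) MeasureTheory.volume 0 t := by
      apply MonotoneOn.intervalIntegrable
      intro x hx y hy hxy
      rw [Set.uIcc_of_le ht] at hx hy
      exact hb_mono (Set.mem_Ici.mpr (mul_nonneg hμ0.le hx.1))
        (Set.mem_Ici.mpr (mul_nonneg hμ0.le hy.1))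
        (mul_le_mul_of_nonneg_left hxy hμ0.le)
    have hmono : ∫ x in (0:ℝ)..t, μ ^ ((1:ℝ)+iA) * b x ≤ ∫ x in (0:ℝ)..t, b (μ * x) := by
      rcases eq_or_lt_of_le ht with h | h
      · rw [← h]; simp
      · apply intervalIntegral.integral_mono_on h.le ((hbi t ht).const_mul _) hint1
        intro x hx
        exact hb_scale μ hμ x hx.1
    rw [intervalIntegral.integral_const_mul] at hmono
    rw [hsub]
    have hexp : μ ^ ((2:ℝ)+iA) = μ * μ ^ ((1:ℝ)+iA) := by
      rw [show (2:ℝ)+iA = 1 + (1+iA) by ring, Real.rpow_add hμ0, Real.rpow_one]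
    rw [hexp, mul_assoc]
    rw [hB] at *
    exact mul_le_mul_of_nonneg_left hmono hμ0.le
  have hB1 : 0 < B 1 := by
    rw [hB]
    exact intervalIntegral.intervalIntegral_pos_of_pos_on (hbi 1 one_pos.le)
      (fun x hx => hb_pos x hx.1) one_pos
  -- Part 1: finiteness
  have part1 : ∀ r : ℝ, 0 ≤ r → youngConjugate B r < ⊤ := by
    intro r hr
    set R : ℝ := max 1 ((r / B 1) ^ ((1:ℝ)/(1+iA))) with hRdef
    have hR1 : (1:ℝ) ≤ R := le_max_left _ _
    have hR0 : (0:ℝ) ≤ R := le_trans zero_le_one hR1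
    have hRpow : r / B 1 ≤ R ^ ((1:ℝ)+iA) := by
      have h1 : (r / B 1) ^ ((1:ℝ)/(1+iA)) ≤ R := le_max_right _ _
      have h2 : ((r / B 1) ^ ((1:ℝ)/(1+iA))) ^ ((1:ℝ)+iA) ≤ R ^ ((1:ℝ)+iA) :=
        Real.rpow_le_rpow (Real.rpow_nonneg (div_nonneg hr hB1.le) _) h1 h1iA.le
      rwa [← Real.rpow_mul (div_nonneg hr hB1.le), one_div,
        inv_mul_cancel₀ (ne_of_gt h1iA), Real.rpow_one] at h2
    have bound : ∀ ρ : ℝ, 0 ≤ ρ → r * ρ - B ρ ≤ r * R := by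
      intro ρ hρ
      rcases le_or_gt ρ R with h | h
      · have := hB_nonneg ρ hρ
        nlinarith
      · have hρ1 : (1:ℝ) ≤ ρ := le_trans hR1 h.le
        have hρ0 : (0:ℝ) < ρ := lt_of_lt_of_le one_pos hρ1
        have hBs := hB_scale ρ hρ1 1 one_pos.le
        rw [mul_one] at hBs
        have hexp : ρ ^ ((2:ℝ)+iA) = ρ * ρ ^ ((1:ℝ)+iA) := by
          rw [show (2:ℝ)+iA = 1 + (1+iA) by ring, Real.rpow_add hρ0, Real.rpow_one]
        have hmono : R ^ ((1:ℝ)+iA) ≤ ρ ^ ((1:ℝ)+iA) :=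
          Real.rpow_le_rpow hR0 h.le h1iA.le
        have hr' : r ≤ ρ ^ ((1:ℝ)+iA) * B 1 := by
          rw [← div_le_iff₀ hB1]
          exact le_trans hRpow hmono
        have : r * ρ ≤ B ρ := by
          calc r * ρ ≤ (ρ ^ ((1:ℝ)+iA) * B 1) * ρ := by nlinarith
            _ = ρ ^ ((2:ℝ)+iA) * B 1 := by rw [hexp]; ring
            _ ≤ B ρ := hBs
        nlinarith [mul_nonneg hr hR0]
    unfold youngConjugate
    refine lt_of_le_of_lt (iSup_le ?_) (EReal.coe_lt_top (r * R))
    rintro ⟨ρ, hρ⟩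
    exact EReal.coe_le_coe_iff.mpr (bound ρ hρ)
  -- Part 2: scaling
  have part2 : ∀ r : ℝ, 0 ≤ r → ∀ l : ℝ, 1 ≤ l →
      youngConjugate B (l * r) ≤ ((l ^ ((2 + iA) / (1 + iA)) : ℝ) : EReal) * youngConjugate B r := by
    intro r hr l hl
    have hl0 : (0:ℝ) < l := lt_of_lt_of_le one_pos hl
    set μ : ℝ := l ^ ((1:ℝ)/(1+iA)) with hμdef
    have hμ1 : (1:ℝ) ≤ μ := Real.one_le_rpow hl (by positivity)
    have hμ0 : (0:ℝ) < μ := lt_of_lt_of_le one_pos hμ1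
    have hlμ : μ ^ ((1:ℝ)+iA) = l := by
      rw [hμdef, ← Real.rpow_mul hl0.le, one_div, inv_mul_cancel₀ (ne_of_gt h1iA),
        Real.rpow_one]
    have hK : μ ^ ((2:ℝ)+iA) = l ^ ((2 + iA) / (1 + iA)) := by
      rw [hμdef, ← Real.rpow_mul hl0.le]
      congr 1
      field_simp
    have hK0 : (0:ℝ) ≤ l ^ ((2 + iA) / (1 + iA)) := Real.rpow_nonneg hl0.le _
    unfold youngConjugate
    apply iSup_le
    rintro ⟨ρ, hρ⟩
    set σ : ℝ := ρ / μ with hσdef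
    have hσ0 : (0:ℝ) ≤ σ := div_nonneg hρ hμ0.le
    have hμσ : μ * σ = ρ := by
      rw [hσdef, mul_div_cancel₀ _ (ne_of_gt hμ0)]
    have hexp : μ ^ ((2:ℝ)+iA) = μ * μ ^ ((1:ℝ)+iA) := by
      rw [show (2:ℝ)+iA = 1 + (1+iA) by ring, Real.rpow_add hμ0, Real.rpow_one]
    have hBs := hB_scale μ hμ1 σ hσ0
    have h1 : l * r * ρ - B ρ ≤ μ ^ ((2:ℝ)+iA) * (r * σ - B σ) := by
      rw [← hμσ]
      have heq : l * r * (μ * σ) = μ ^ ((2:ℝ)+iA) * (r * σ) := by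
        rw [← hlμ, hexp]; ring
      calc l * r * (μ * σ) - B (μ * σ)
          ≤ μ ^ ((2:ℝ)+iA) * (r * σ) - μ ^ ((2:ℝ)+iA) * B σ := by
            rw [heq]; linarith
        _ = μ ^ ((2:ℝ)+iA) * (r * σ - B σ) := by ring
    calc ((l * r * ρ - B ρ : ℝ) : EReal)
        ≤ ((μ ^ ((2:ℝ)+iA) * (r * σ - B σ) : ℝ) : EReal) := EReal.coe_le_coe_iff.mpr h1
      _ = ((l ^ ((2 + iA) / (1 + iA)) : ℝ) : EReal) * ((r * σ - B σ : ℝ) : EReal) := by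
          rw [← hK, EReal.coe_mul]
      _ ≤ ((l ^ ((2 + iA) / (1 + iA)) : ℝ) : EReal) *
            ⨆ ρ' : {ρ' : ℝ // 0 ≤ ρ'}, ((r * (ρ' : ℝ) - B (ρ' : ℝ) : ℝ) : EReal) := by
          apply mul_le_mul_of_nonneg_left
          · exact le_iSup (fun ρ' : {ρ' : ℝ // 0 ≤ ρ'} =>
              ((r * (ρ' : ℝ) - B (ρ' : ℝ) : ℝ) : EReal)) ⟨σ, hσ0⟩
          · exact EReal.coe_nonneg.mpr hK0
  refine ⟨part1, part2, ⟨(2:ℝ) ^ ((2 + iA) / (1 + iA)), ?_, fun r hr => part2 r hr 2 one_le_two⟩⟩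
  exact (Real.one_lt_rpow_iff_of_pos (by norm_num)).mpr
    (Or.inl ⟨by norm_num, div_pos (by linarith) h1iA⟩)
end

section
/- Let n ≥ 1 and define A : ℝⁿ → ℝⁿ by A(ξ) = a(|ξ|)·ξ for ξ ≠ 0 and A(0) = 0. Then A is continuous on ℝⁿ and strictly monotone: (A(ξ) − A(η)) · (ξ − η) > 0 for all ξ, η ∈ ℝⁿ with ξ ≠ η. -/
/-!
Put `φ(t) = t a(t)`. The lower index bound `i_a a ≤ t a'` gives `φ' = a + t a' ≥ (1 + i_a) a > 0`,
so `φ` is strictly increasing, and `(a(t) t^{-i_a})' = t^{-i_a-1} (t a' - i_a a) ≥ 0`, so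
`φ(t) ≤ a(1) t^{1+i_a} → 0` as `t → 0⁺`; this gives continuity of `A` at the origin.
For monotonicity, with `s = |ξ|`, `t = |η|`,
`(A ξ - A η)·(ξ - η) = (φ(s) - φ(t))(s - t) + (a(s) + a(t))(s t - ξ·η)`,
where the first term is positive unless `s = t` and the second is nonnegative by Cauchy–Schwarz,
and positive when `s = t` and `ξ ≠ η`.
-/

open Set Filter Topology

section IndexBound

variable {a a' : ℝ → ℝ} {i : ℝ}

theorem strictMonoOn_id_mul_of_index_bound (ha_pos : ∀ t, 0 < t → 0 < a t)
    (ha_deriv : ∀ t, 0 < t → HasDerivAt a (a' t) t) (hi : -1 < i)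
    (hindex : ∀ t, 0 < t → i * a t ≤ t * a' t) :
    StrictMonoOn (fun t => t * a t) (Ioi (0 : ℝ)) := by
  have hderiv : ∀ t, 0 < t → HasDerivAt (fun s => s * a s) (a t + t * a' t) t := fun t ht => by
    simpa using (hasDerivAt_id' t).fun_mul (ha_deriv t ht)
  refine strictMonoOn_of_hasDerivWithinAt_pos (convex_Ioi (0 : ℝ))
    (fun t ht => (hderiv t ht).continuousAt.continuousWithinAt)
    (fun t ht => (hderiv t (by simpa using ht)).hasDerivWithinAt) fun t ht => ?_
  rw [interior_Ioi] at ht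
  nlinarith [ha_pos t ht, hindex t ht]

theorem monotoneOn_mul_rpow_neg_of_index_bound (ha_deriv : ∀ t, 0 < t → HasDerivAt a (a' t) t)
    (hindex : ∀ t, 0 < t → i * a t ≤ t * a' t) :
    MonotoneOn (fun t => a t * t ^ (-i)) (Ioi (0 : ℝ)) := by
  have hderiv : ∀ t, 0 < t → HasDerivAt (fun s => a s * s ^ (-i))
      (a' t * t ^ (-i) + a t * (-i * t ^ (-i - 1))) t := fun t ht =>
    (ha_deriv t ht).mul (Real.hasDerivAt_rpow_const (Or.inl ht.ne'))
  refine monotoneOn_of_hasDerivWithinAt_nonneg (convex_Ioi (0 : ℝ))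
    (fun t ht => (hderiv t ht).continuousAt.continuousWithinAt)
    (fun t ht => (hderiv t (by simpa using ht)).hasDerivWithinAt) fun t ht => ?_
  rw [interior_Ioi] at ht
  have hsplit : t ^ (-i) = t * t ^ (-i - 1) := by
    rw [Real.rpow_sub_one ht.ne', mul_div_cancel₀ _ ht.ne']
  calc (0 : ℝ) ≤ (t * a' t - i * a t) * t ^ (-i - 1) :=
        mul_nonneg (by linarith [hindex t ht]) (Real.rpow_pos_of_pos ht _).le
    _ = a' t * t ^ (-i) + a t * (-i * t ^ (-i - 1)) := by rw [hsplit]; ring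

theorem tendsto_id_mul_nhdsGT_zero_of_index_bound (ha_pos : ∀ t, 0 < t → 0 < a t)
    (ha_deriv : ∀ t, 0 < t → HasDerivAt a (a' t) t) (hi : -1 < i)
    (hindex : ∀ t, 0 < t → i * a t ≤ t * a' t) :
    Tendsto (fun t => t * a t) (𝓝[>] 0) (𝓝 0) := by
  have hψ := monotoneOn_mul_rpow_neg_of_index_bound ha_deriv hindex
  have hbound : ∀ t ∈ Ioc (0 : ℝ) 1, t * a t ≤ a 1 * t ^ (1 + i) := fun t ⟨ht, ht1⟩ => by
    have hle : a t * t ^ (-i) ≤ a 1 := by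
      simpa using hψ (mem_Ioi.2 ht) (mem_Ioi.2 one_pos) ht1
    calc t * a t = t ^ (1 + i) * (a t * t ^ (-i)) := by
          rw [mul_left_comm, ← Real.rpow_add ht, add_neg_cancel_right, Real.rpow_one, mul_comm]
      _ ≤ t ^ (1 + i) * a 1 := by gcongr
      _ = a 1 * t ^ (1 + i) := mul_comm _ _
  have hrpow : Tendsto (fun t : ℝ => a 1 * t ^ (1 + i)) (𝓝[>] 0) (𝓝 0) := by
    refine tendsto_nhdsWithin_of_tendsto_nhds ?_
    simpa [Real.zero_rpow (by linarith : 1 + i ≠ 0)] using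
      ((Real.continuousAt_rpow_const 0 (1 + i) (Or.inr (by linarith))).const_mul (a 1)).tendsto
  refine tendsto_of_tendsto_of_tendsto_of_le_of_le' tendsto_const_nhds hrpow ?_ ?_
  · filter_upwards [self_mem_nhdsWithin] with t ht using (mul_pos ht (ha_pos t ht)).le
  · filter_upwards [Ioc_mem_nhdsGT one_pos] with t ht using hbound t ht

end IndexBound

section RadialField

variable {a : ℝ → ℝ}

theorem continuous_smul_norm {E : Type*} [NormedAddCommGroup E] [NormedSpace ℝ E]
    (ha : ContinuousOn a (Ioi 0)) (h0 : Tendsto (fun t => t * a t) (𝓝[>] 0) (𝓝 0)) :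
    Continuous fun x : E => a ‖x‖ • x := by
  refine continuous_iff_continuousAt.2 fun x => ?_
  rcases eq_or_ne x 0 with rfl | hx
  · rw [← continuousWithinAt_compl_self, ContinuousWithinAt, smul_zero,
      tendsto_zero_iff_norm_tendsto_zero]
    have hnorm : ∀ y : E, ‖a ‖y‖ • y‖ = ‖‖y‖ * a ‖y‖‖ := fun y => by
      rw [norm_smul, norm_mul, norm_norm, mul_comm]
    simpa only [hnorm, norm_zero, Function.comp_def] using (h0.comp tendsto_norm_nhdsNE_zero).norm
  · exact ((ha.continuousAt (Ioi_mem_nhds (norm_pos_iff.2 hx))).comp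
      continuous_norm.continuousAt).smul continuousAt_id

variable {E : Type*} [NormedAddCommGroup E] [InnerProductSpace ℝ E]

theorem inner_smul_norm_sub_smul_norm (a : ℝ → ℝ) (x y : E) :
    inner ℝ (a ‖x‖ • x - a ‖y‖ • y) (x - y) =
      (‖x‖ * a ‖x‖ - ‖y‖ * a ‖y‖) * (‖x‖ - ‖y‖) +
        (a ‖x‖ + a ‖y‖) * (‖x‖ * ‖y‖ - inner ℝ x y) := by
  simp only [inner_sub_left, inner_sub_right, real_inner_smul_left, real_inner_self_eq_norm_sq,
    real_inner_comm x y]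
  ring

theorem inner_smul_norm_sub_smul_norm_pos (ha_pos : ∀ t, 0 < t → 0 < a t)
    (hφ : StrictMonoOn (fun t => t * a t) (Ioi 0)) {x y : E} (hxy : x ≠ y) :
    0 < inner ℝ (a ‖x‖ • x - a ‖y‖ • y) (x - y) := by
  have hφ₀ : StrictMonoOn (fun t => t * a t) (Ici 0) := by
    intro s hs t _ hst
    rcases (mem_Ici.1 hs).eq_or_lt with rfl | hs
    · simpa using mul_pos hst (ha_pos t hst)
    · exact hφ hs (hs.trans hst) hst
  have hcross : 0 ≤ (a ‖x‖ + a ‖y‖) * (‖x‖ * ‖y‖ - inner ℝ x y) := by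
    rcases eq_or_ne x 0 with rfl | hx
    · simp
    rcases eq_or_ne y 0 with rfl | hy
    · simp
    exact mul_nonneg (add_pos (ha_pos _ (norm_pos_iff.2 hx)) (ha_pos _ (norm_pos_iff.2 hy))).le
      (sub_nonneg.2 (real_inner_le_norm x y))
  rw [inner_smul_norm_sub_smul_norm]
  rcases lt_trichotomy ‖x‖ ‖y‖ with hlt | heq | hgt
  · nlinarith [hφ₀ (norm_nonneg x) (norm_nonneg y) hlt]
  · -- equal norms force `x ≠ 0`, and then Cauchy–Schwarz is strict since `‖x - y‖ > 0`
    have hx : x ≠ 0 := by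
      rintro rfl
      exact hxy (norm_eq_zero.1 (by rw [← heq, norm_zero])).symm
    have hdist : 0 < ‖x - y‖ ^ 2 := pow_pos (norm_pos_iff.2 (sub_ne_zero.2 hxy)) 2
    have hy : 0 < ‖y‖ := heq ▸ norm_pos_iff.2 hx
    rw [norm_sub_sq_real, heq] at hdist
    rw [heq, sub_self, zero_mul, zero_add]
    exact mul_pos (add_pos (ha_pos _ hy) (ha_pos _ hy)) (by linarith)
  · nlinarith [hφ₀ (norm_nonneg y) (norm_nonneg x) hgt]

end RadialField

theorem stmt_11_general (a a' : ℝ → ℝ) (iA sA : ℝ)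
    (hiA : -1 < iA)
    (ha_pos : ∀ t, 0 < t → 0 < a t)
    (ha_deriv : ∀ t, 0 < t → HasDerivAt a (a' t) t)
    (hbound : ∀ t, 0 < t → iA ≤ t * a' t / a t ∧ t * a' t / a t ≤ sA)
    (n : ℕ)
    (A : EuclideanSpace ℝ (Fin n) → EuclideanSpace ℝ (Fin n))
    (hA0 : A 0 = 0)
    (hA : ∀ ξ : EuclideanSpace ℝ (Fin n), ξ ≠ 0 → A ξ = a ‖ξ‖ • ξ) :
    Continuous A ∧
    ∀ ξ η : EuclideanSpace ℝ (Fin n), ξ ≠ η →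
      (0 : ℝ) < inner ℝ (A ξ - A η) (ξ - η) := by
  have hA_eq : A = fun ξ => a ‖ξ‖ • ξ := funext fun ξ => by
    rcases eq_or_ne ξ 0 with rfl | hξ
    · simp [hA0]
    · exact hA ξ hξ
  have hindex : ∀ t, 0 < t → iA * a t ≤ t * a' t := fun t ht =>
    (le_div_iff₀ (ha_pos t ht)).1 (hbound t ht).1
  subst hA_eq
  exact ⟨continuous_smul_norm (fun t ht => (ha_deriv t ht).continuousAt.continuousWithinAt)
      (tendsto_id_mul_nhdsGT_zero_of_index_bound ha_pos ha_deriv hiA hindex),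
    fun ξ η => inner_smul_norm_sub_smul_norm_pos ha_pos
      (strictMonoOn_id_mul_of_index_bound ha_pos ha_deriv hiA hindex)⟩

/-- strict monotonicity of the stress field, Step 3 of the proof of
Theorem 1.1. The vector field `A(ξ) = a(|ξ|)ξ` (with `A(0)=0`) is continuous on `ℝⁿ`
and strictly monotone: `(A(ξ)−A(η))·(ξ−η) > 0` whenever `ξ ≠ η`. -/
theorem stmt_11 (a a' : ℝ → ℝ) (iA sA : ℝ)
    (hiA : -1 < iA) (hias : iA ≤ sA)
    (ha_pos : ∀ t, 0 < t → 0 < a t)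
    (ha_deriv : ∀ t, 0 < t → HasDerivAt a (a' t) t)
    (ha'_cont : ContinuousOn a' (Set.Ioi 0))
    (hbound : ∀ t, 0 < t → iA ≤ t * a' t / a t ∧ t * a' t / a t ≤ sA)
    (n : ℕ) (hn : 1 ≤ n)
    (A : EuclideanSpace ℝ (Fin n) → EuclideanSpace ℝ (Fin n))
    (hA0 : A 0 = 0)
    (hA : ∀ ξ : EuclideanSpace ℝ (Fin n), ξ ≠ 0 → A ξ = a ‖ξ‖ • ξ) :
    Continuous A ∧
    ∀ ξ η : EuclideanSpace ℝ (Fin n), ξ ≠ η →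
      (0 : ℝ) < inner ℝ (A ξ - A η) (ξ - η) :=
  stmt_11_general a a' iA sA hiA ha_pos ha_deriv hbound n A hA0 hA
end

section
/- Let n ≥ 1, S ≥ 0, and let â : (0,∞) → (0,∞) be of class C¹ with |t·â'(t)| ≤ S·â(t) for all t > 0; let ε > 0 and define a_ε(t) := â((ε + t²)^{1/2}) for t ≥ 0. Let Ω ⊆ ℝⁿ be open, let u ∈ C²(Ω), let β ∈ ℝ, let θ > 0, and let ψ ∈ C_c^∞(ℝⁿ) with support contained in Ω. Then | ∫_Ω div(a_ε(|∇u|)∇u) · ψ² · a_ε(|∇u|)^{−β} dx | ≤ ∫_Ω a_ε(|∇u|)^{1−β}·|∇u|·|∇ψ|² dx + ∫_Ω a_ε(|∇u|)^{1−β}·|∇u|·ψ² dx + θ·|β|·∫_Ω ψ²·a_ε(|∇u|)^{−β} dx + (|β|·S²/(4θ))·∫_Ω a_ε(|∇u|)^{2−β}·|D²u|²·ψ² dx. -/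
/-- The partial derivative `∂_j u` of a scalar function on `ℝⁿ`. -/
noncomputable def pderiv' {n : ℕ} (u : EuclideanSpace ℝ (Fin n) → ℝ) (j : Fin n)
    (x : EuclideanSpace ℝ (Fin n)) : ℝ :=
  fderiv ℝ u x (EuclideanSpace.single j 1)

/-- The squared Euclidean norm `|∇u|²` of the gradient. -/
noncomputable def gradSq {n : ℕ} (u : EuclideanSpace ℝ (Fin n) → ℝ)
    (x : EuclideanSpace ℝ (Fin n)) : ℝ :=
  ∑ j, (pderiv' u j x) ^ 2

/-- The squared Frobenius norm `|D²u|²` of the Hessian. -/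
noncomputable def hessSq {n : ℕ} (u : EuclideanSpace ℝ (Fin n) → ℝ)
    (x : EuclideanSpace ℝ (Fin n)) : ℝ :=
  ∑ i, ∑ j, (pderiv' (pderiv' u j) i x) ^ 2

/-- The divergence `div(c ∇u) = Σ_j ∂_j(c ∂_j u)` of the weighted gradient field. -/
noncomputable def divField {n : ℕ} (c : EuclideanSpace ℝ (Fin n) → ℝ)
    (u : EuclideanSpace ℝ (Fin n) → ℝ) (x : EuclideanSpace ℝ (Fin n)) : ℝ :=
  ∑ l, pderiv' (fun y => c y * pderiv' u l y) l x


open MeasureTheory Real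

lemma contDiffOn_pderiv' {n : ℕ} {u : EuclideanSpace ℝ (Fin n) → ℝ}
    {Ω : Set (EuclideanSpace ℝ (Fin n))} (hΩ : IsOpen Ω) (hu : ContDiffOn ℝ 2 u Ω) (j : Fin n) :
    ContDiffOn ℝ 1 (pderiv' u j) Ω := by
  have h1 : ContDiffOn ℝ 1 (fderiv ℝ u) Ω := hu.fderiv_of_isOpen hΩ (by norm_num)
  exact h1.clm_apply contDiffOn_const

lemma contDiff_of_contDiffOn_of_zero {n : ℕ} {f : EuclideanSpace ℝ (Fin n) → ℝ}
    {Ω K : Set (EuclideanSpace ℝ (Fin n))} (hΩ : IsOpen Ω) (hK : IsClosed K) (hKΩ : K ⊆ Ω)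
    (hf : ContDiffOn ℝ 1 f Ω) (h0 : ∀ x ∉ K, f x = 0) : ContDiff ℝ 1 f := by
  rw [contDiff_iff_contDiffAt]
  intro x
  by_cases hx : x ∈ Ω
  · exact hf.contDiffAt (hΩ.mem_nhds hx)
  · have hxK : x ∈ Kᶜ := fun h => hx (hKΩ h)
    have hev : f =ᶠ[nhds x] (fun _ => 0) :=
      Filter.eventuallyEq_of_mem (hK.isOpen_compl.mem_nhds hxK) h0
    exact (contDiffAt_const (c := (0:ℝ))).congr_of_eventuallyEq hev

lemma continuous_of_continuousOn_of_zero {n : ℕ} {f : EuclideanSpace ℝ (Fin n) → ℝ}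
    {Ω K : Set (EuclideanSpace ℝ (Fin n))} (hΩ : IsOpen Ω) (hK : IsClosed K) (hKΩ : K ⊆ Ω)
    (hf : ContinuousOn f Ω) (h0 : ∀ x ∉ K, f x = 0) : Continuous f := by
  rw [continuous_iff_continuousAt]
  intro x
  by_cases hx : x ∈ Ω
  · exact hf.continuousAt (hΩ.mem_nhds hx)
  · have hxK : x ∈ Kᶜ := fun h => hx (hKΩ h)
    have hev : f =ᶠ[nhds x] (fun _ => 0) :=
      Filter.eventuallyEq_of_mem (hK.isOpen_compl.mem_nhds hxK) h0
    exact continuousAt_const.congr hev.symm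

lemma pderiv'_eq_zero_of_nmem {n : ℕ} {f : EuclideanSpace ℝ (Fin n) → ℝ}
    {K : Set (EuclideanSpace ℝ (Fin n))} (hK : IsClosed K)
    (h0 : ∀ x ∉ K, f x = 0) {x : EuclideanSpace ℝ (Fin n)} (hx : x ∉ K) (l : Fin n) :
    pderiv' f l x = 0 := by
  have hev : f =ᶠ[nhds x] (fun _ => 0) :=
    Filter.eventuallyEq_of_mem (hK.isOpen_compl.mem_nhds hx) h0
  simp [pderiv', hev.fderiv_eq]

lemma integral_pderiv'_eq_zero {n : ℕ} {f : EuclideanSpace ℝ (Fin n) → ℝ}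
    (hf : ContDiff ℝ 1 f) (hsupp : HasCompactSupport f) (l : Fin n) :
    ∫ x, pderiv' f l x = 0 := by
  have h := integral_mul_fderiv_eq_neg_fderiv_mul_of_integrable
    (μ := (volume : Measure (EuclideanSpace ℝ (Fin n))))
    (f := f) (g := fun _ => (1:ℝ)) (v := EuclideanSpace.single l 1)
    ?_ ?_ ?_ (fun x _ => hf.differentiable one_ne_zero x) (fun x _ => differentiableAt_const 1)
  · simp only [fderiv_fun_const, Pi.zero_apply, ContinuousLinearMap.zero_apply, mul_zero, mul_one,
      integral_zero] at h
    have : (∫ x, pderiv' f l x) = ∫ x, (fderiv ℝ f x) (EuclideanSpace.single l 1) := rfl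
    rw [this]
    linarith [h]
  · simp only [mul_one]
    exact ((hf.continuous_fderiv one_ne_zero).clm_apply continuous_const).integrable_of_hasCompactSupport
      (hsupp.fderiv_apply _ _)
  · simp only [fderiv_fun_const, Pi.zero_apply, ContinuousLinearMap.zero_apply, mul_zero]
    exact integrable_zero _ _ _
  · simp only [mul_one]
    exact hf.continuous.integrable_of_hasCompactSupport hsupp

lemma contDiffOn_ahat {ahat ahat' : ℝ → ℝ}
    (hderiv : ∀ t, 0 < t → HasDerivAt ahat (ahat' t) t)
    (h'cont : ContinuousOn ahat' (Set.Ioi 0)) :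
    ContDiffOn ℝ 1 ahat (Set.Ioi 0) := by
  have h := (contDiffOn_succ_iff_deriv_of_isOpen (n := 0) (f := ahat) isOpen_Ioi).2
    ⟨fun t ht => (hderiv t ht).differentiableAt.differentiableWithinAt,
     by simp,
     by
      rw [contDiffOn_zero]
      exact h'cont.congr fun t ht => (hderiv t ht).deriv⟩
  simpa using h

lemma pderiv_phi {n : ℕ} {A ψ : EuclideanSpace ℝ (Fin n) → ℝ} {β : ℝ}
    {x : EuclideanSpace ℝ (Fin n)}
    (hAd : HasFDerivAt A (fderiv ℝ A x) x) (hApos : 0 < A x)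
    (hψd : HasFDerivAt ψ (fderiv ℝ ψ x) x) (l : Fin n) :
    pderiv' (fun y => ψ y ^ 2 * A y ^ (-β)) l x
      = ψ x ^ 2 * ((-β * A x ^ (-β - 1)) * pderiv' A l x)
        + A x ^ (-β) * (2 * ψ x * pderiv' ψ l x) := by
  have hrp : HasFDerivAt (fun y => A y ^ (-β)) ((-β * A x ^ (-β - 1)) • fderiv ℝ A x) x :=
    (Real.hasDerivAt_rpow_const (p := -β) (Or.inl (ne_of_gt hApos))).comp_hasFDerivAt x hAd
  have hψ2 : HasFDerivAt (fun y => ψ y ^ 2) (ψ x • fderiv ℝ ψ x + ψ x • fderiv ℝ ψ x) x := by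
    have h2 := hψd.mul hψd
    have heq : (fun y => ψ y ^ 2) = fun y => ψ y * ψ y := by funext y; ring
    rw [heq]; exact h2
  have hφd : HasFDerivAt (fun y => ψ y ^ 2 * A y ^ (-β)) _ x := hψ2.mul hrp
  have := hφd.fderiv
  simp only [pderiv', this, ContinuousLinearMap.add_apply, ContinuousLinearMap.smul_apply,
    smul_eq_mul]
  ring

lemma gradSq_nonneg {n : ℕ} (u : EuclideanSpace ℝ (Fin n) → ℝ) (x) : 0 ≤ gradSq u x :=
  Finset.sum_nonneg fun _ _ => sq_nonneg _

lemma hessSq_nonneg {n : ℕ} (u : EuclideanSpace ℝ (Fin n) → ℝ) (x) : 0 ≤ hessSq u x :=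
  Finset.sum_nonneg fun _ _ => Finset.sum_nonneg fun _ _ => sq_nonneg _

lemma pointwise_bound {n : ℕ} {A ψ u : EuclideanSpace ℝ (Fin n) → ℝ} {β S θ : ℝ}
    (hS : 0 ≤ S) (hθ : 0 < θ) {x : EuclideanSpace ℝ (Fin n)}
    (hAd : HasFDerivAt A (fderiv ℝ A x) x) (hApos : 0 < A x)
    (hψd : HasFDerivAt ψ (fderiv ℝ ψ x) x)
    (hkey : |∑ l, pderiv' u l x * pderiv' A l x| ≤ S * A x * Real.sqrt (hessSq u x)) :
    |∑ l, A x * pderiv' u l x * pderiv' (fun y => ψ y ^ 2 * A y ^ (-β)) l x|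
      ≤ A x ^ (1 - β) * Real.sqrt (gradSq u x) * gradSq ψ x
        + A x ^ (1 - β) * Real.sqrt (gradSq u x) * ψ x ^ 2
        + θ * |β| * (ψ x ^ 2 * A x ^ (-β))
        + (|β| * S ^ 2 / (4 * θ)) * (A x ^ (2 - β) * hessSq u x * ψ x ^ 2) := by
  -- rpow identities
  have hA1 : A x * A x ^ (-β) = A x ^ (1 - β) := by
    have h := Real.rpow_add hApos 1 (-β)
    rw [Real.rpow_one] at h
    rw [← h]; congr 1 <;> ring
  have hA2 : A x * A x ^ (-β - 1) = A x ^ (-β) := by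
    have h := Real.rpow_add hApos 1 (-β - 1)
    rw [Real.rpow_one] at h
    rw [← h]; congr 1 <;> ring
  have hP2 : A x ^ (-β / 2) * A x ^ (-β / 2) = A x ^ (-β) := by
    rw [← Real.rpow_add hApos]; congr 1; ring
  have hQ2 : A x ^ (1 - β / 2) * A x ^ (1 - β / 2) = A x ^ (2 - β) := by
    rw [← Real.rpow_add hApos]; congr 1; ring
  have hPQ : A x ^ (-β / 2) * A x ^ (1 - β / 2) = A x ^ (1 - β) := by
    rw [← Real.rpow_add hApos]; congr 1; ring
  have hrpos : ∀ r : ℝ, 0 < A x ^ r := fun r => Real.rpow_pos_of_pos hApos r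
  -- structural identity
  have hG : (∑ l, A x * pderiv' u l x * pderiv' (fun y => ψ y ^ 2 * A y ^ (-β)) l x)
      = (2 * ψ x * A x ^ (1 - β)) * (∑ l, pderiv' u l x * pderiv' ψ l x)
        + (-β * ψ x ^ 2 * A x ^ (-β)) * (∑ l, pderiv' u l x * pderiv' A l x) := by
    simp only [pderiv_phi hAd hApos hψd]
    rw [← hA1, ← hA2, Finset.mul_sum, Finset.mul_sum, ← Finset.sum_add_distrib]
    exact Finset.sum_congr rfl fun l _ => by ring
  -- Cauchy-Schwarz for ∇u · ∇ψ
  have hCS1 : |∑ l, pderiv' u l x * pderiv' ψ l x|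
      ≤ Real.sqrt (gradSq u x) * Real.sqrt (gradSq ψ x) := by
    have h1 := Finset.sum_mul_sq_le_sq_mul_sq Finset.univ
      (fun l => pderiv' u l x) (fun l => pderiv' ψ l x)
    rw [← Real.sqrt_sq_eq_abs, ← Real.sqrt_mul (gradSq_nonneg u x)]
    exact Real.sqrt_le_sqrt (by simpa [gradSq] using h1)
  -- Young's inequality piece
  have hY : S * (A x ^ (1 - β)) * Real.sqrt (hessSq u x)
      ≤ θ * A x ^ (-β) + S ^ 2 / (4 * θ) * (A x ^ (2 - β) * hessSq u x) := by
    set P := A x ^ (-β / 2) with hP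
    set Q := A x ^ (1 - β / 2) with hQ
    set R := Real.sqrt (hessSq u x) with hR
    have hR2 : R * R = hessSq u x := Real.mul_self_sqrt (hessSq_nonneg u x)
    have h4 : (0:ℝ) < 4 * θ := by linarith
    have hkey2 : θ * (P * P) + S ^ 2 / (4 * θ) * ((Q * Q) * (R * R)) - S * (P * Q) * R
        = (2 * θ * P - S * Q * R) ^ 2 / (4 * θ) := by field_simp; ring
    have hnn := div_nonneg (sq_nonneg (2 * θ * P - S * Q * R)) h4.le
    rw [← hPQ, ← hP2, ← hQ2, ← hR2]
    linarith [hkey2, hnn]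
  -- AM-GM for 2|ψ|√(gradSq ψ)
  have hB1 : 2 * |ψ x| * Real.sqrt (gradSq ψ x) ≤ ψ x ^ 2 + gradSq ψ x := by
    nlinarith [sq_nonneg (|ψ x| - Real.sqrt (gradSq ψ x)), sq_abs (ψ x),
      Real.sq_sqrt (gradSq_nonneg ψ x)]
  have hsu : 0 ≤ Real.sqrt (gradSq u x) := Real.sqrt_nonneg _
  have hsh : 0 ≤ Real.sqrt (hessSq u x) := Real.sqrt_nonneg _
  -- first term estimate
  have e1 : |(2 * ψ x * A x ^ (1 - β)) * (∑ l, pderiv' u l x * pderiv' ψ l x)|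
      ≤ A x ^ (1 - β) * Real.sqrt (gradSq u x) * gradSq ψ x
        + A x ^ (1 - β) * Real.sqrt (gradSq u x) * ψ x ^ 2 := by
    rw [abs_mul]
    have hc1 : |2 * ψ x * A x ^ (1 - β)| = 2 * |ψ x| * A x ^ (1 - β) := by
      rw [abs_mul, abs_mul, abs_two, abs_of_pos (hrpos _)]
    rw [hc1]
    have step : 2 * |ψ x| * A x ^ (1 - β) * |∑ l, pderiv' u l x * pderiv' ψ l x|
        ≤ 2 * |ψ x| * A x ^ (1 - β) * (Real.sqrt (gradSq u x) * Real.sqrt (gradSq ψ x)) :=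
      mul_le_mul_of_nonneg_left hCS1 (by positivity)
    have step2 : (A x ^ (1 - β) * Real.sqrt (gradSq u x)) * (2 * |ψ x| * Real.sqrt (gradSq ψ x))
        ≤ (A x ^ (1 - β) * Real.sqrt (gradSq u x)) * (ψ x ^ 2 + gradSq ψ x) :=
      mul_le_mul_of_nonneg_left hB1 (by positivity)
    nlinarith [step, step2]
  -- second term estimate
  have e2 : |(-β * ψ x ^ 2 * A x ^ (-β)) * (∑ l, pderiv' u l x * pderiv' A l x)|
      ≤ θ * |β| * (ψ x ^ 2 * A x ^ (-β))
        + (|β| * S ^ 2 / (4 * θ)) * (A x ^ (2 - β) * hessSq u x * ψ x ^ 2) := by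
    rw [abs_mul]
    have hc2 : |(-β * ψ x ^ 2 * A x ^ (-β))| = |β| * ψ x ^ 2 * A x ^ (-β) := by
      rw [abs_mul, abs_mul, abs_neg, abs_of_pos (hrpos _), abs_of_nonneg (sq_nonneg (ψ x))]
    rw [hc2]
    calc (|β| * ψ x ^ 2 * A x ^ (-β)) * |∑ l, pderiv' u l x * pderiv' A l x|
        ≤ (|β| * ψ x ^ 2 * A x ^ (-β)) * (S * A x * Real.sqrt (hessSq u x)) :=
          mul_le_mul_of_nonneg_left hkey (by positivity)
      _ = (|β| * ψ x ^ 2) * (S * A x ^ (1 - β) * Real.sqrt (hessSq u x)) := by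
          rw [← hA1]; ring
      _ ≤ (|β| * ψ x ^ 2) * (θ * A x ^ (-β) + S ^ 2 / (4 * θ) * (A x ^ (2 - β) * hessSq u x)) :=
          mul_le_mul_of_nonneg_left hY (by positivity)
      _ = θ * |β| * (ψ x ^ 2 * A x ^ (-β))
          + (|β| * S ^ 2 / (4 * θ)) * (A x ^ (2 - β) * hessSq u x * ψ x ^ 2) := by ring
  calc |∑ l, A x * pderiv' u l x * pderiv' (fun y => ψ y ^ 2 * A y ^ (-β)) l x|
      ≤ |(2 * ψ x * A x ^ (1 - β)) * (∑ l, pderiv' u l x * pderiv' ψ l x)|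
        + |(-β * ψ x ^ 2 * A x ^ (-β)) * (∑ l, pderiv' u l x * pderiv' A l x)| := by
        rw [hG]; exact abs_add_le _ _
    _ ≤ _ := by linarith [e1, e2]

lemma main_ineq {n : ℕ} (S θ β : ℝ) (hS : 0 ≤ S) (hθ : 0 < θ)
    {Ω : Set (EuclideanSpace ℝ (Fin n))} (hΩ : IsOpen Ω)
    {u : EuclideanSpace ℝ (Fin n) → ℝ} (hu : ContDiffOn ℝ 2 u Ω)
    {A : EuclideanSpace ℝ (Fin n) → ℝ} (hA : ContDiffOn ℝ 1 A Ω)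
    (hApos : ∀ x, 0 < A x)
    (hkey : ∀ x ∈ Ω, |∑ l, pderiv' u l x * pderiv' A l x| ≤ S * A x * Real.sqrt (hessSq u x))
    {ψ : EuclideanSpace ℝ (Fin n) → ℝ}
    (hψ : ContDiff ℝ (⊤ : ℕ∞) ψ) (hψc : HasCompactSupport ψ) (hψΩ : tsupport ψ ⊆ Ω) :
    |∫ x in Ω, divField A u x * ψ x ^ 2 * A x ^ (-β)|
      ≤ (∫ x in Ω, A x ^ (1 - β) * Real.sqrt (gradSq u x) * gradSq ψ x)
        + (∫ x in Ω, A x ^ (1 - β) * Real.sqrt (gradSq u x) * ψ x ^ 2)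
        + θ * |β| * (∫ x in Ω, ψ x ^ 2 * A x ^ (-β))
        + (|β| * S ^ 2 / (4 * θ)) * (∫ x in Ω, A x ^ (2 - β) * hessSq u x * ψ x ^ 2) := by
  classical
  have hKcl : IsClosed (tsupport ψ) := isClosed_tsupport ψ
  have hψ0 : ∀ x ∉ tsupport ψ, ψ x = 0 := fun x hx => image_eq_zero_of_notMem_tsupport hx
  have hψ1 : ContDiff ℝ 1 ψ := hψ.of_le (by simp)
  have hψd : ∀ x, HasFDerivAt ψ (fderiv ℝ ψ x) x :=
    fun x => (hψ1.differentiable one_ne_zero x).hasFDerivAt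
  have huj := contDiffOn_pderiv' hΩ hu
  have hArC : ∀ r : ℝ, ContDiffOn ℝ 1 (fun x => A x ^ r) Ω := fun r =>
    hA.rpow_const_of_ne (fun x _ => (hApos x).ne')
  have hφC : ContDiffOn ℝ 1 (fun y => ψ y ^ 2 * A y ^ (-β)) Ω :=
    ((hψ1.pow 2).contDiffOn).mul (hArC (-β))
  have hφ0 : ∀ x ∉ tsupport ψ, ψ x ^ 2 * A x ^ (-β) = 0 := fun x hx => by simp [hψ0 x hx]
  have hφglob : ContDiff ℝ 1 (fun y => ψ y ^ 2 * A y ^ (-β)) :=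
    contDiff_of_contDiffOn_of_zero hΩ hKcl hψΩ hφC hφ0
  have hVC : ∀ l, ContDiffOn ℝ 1 (fun y => A y * pderiv' u l y) Ω := fun l => hA.mul (huj l)
  have hhC : ∀ l, ContDiffOn ℝ 1 (fun y => (A y * pderiv' u l y) * (ψ y ^ 2 * A y ^ (-β))) Ω :=
    fun l => (hVC l).mul hφC
  have hh0 : ∀ l, ∀ x ∉ tsupport ψ, (A x * pderiv' u l x) * (ψ x ^ 2 * A x ^ (-β)) = 0 :=
    fun l x hx => by simp [hψ0 x hx]
  have hhglob : ∀ l, ContDiff ℝ 1 (fun y => (A y * pderiv' u l y) * (ψ y ^ 2 * A y ^ (-β))) :=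
    fun l => contDiff_of_contDiffOn_of_zero hΩ hKcl hψΩ (hhC l) (hh0 l)
  have hhsupp : ∀ l, HasCompactSupport (fun y => (A y * pderiv' u l y) * (ψ y ^ 2 * A y ^ (-β))) :=
    fun l => HasCompactSupport.intro hψc (hh0 l)
  have hIBP : ∀ l, ∫ x, pderiv' (fun y => (A y * pderiv' u l y) * (ψ y ^ 2 * A y ^ (-β))) l x = 0 :=
    fun l => integral_pderiv'_eq_zero (hhglob l) (hhsupp l) l
  -- key pointwise identity on Ω
  have hkeyid : ∀ x ∈ Ω, divField A u x * ψ x ^ 2 * A x ^ (-β)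
      = (∑ l, pderiv' (fun y => (A y * pderiv' u l y) * (ψ y ^ 2 * A y ^ (-β))) l x)
        - ∑ l, A x * pderiv' u l x * pderiv' (fun y => ψ y ^ 2 * A y ^ (-β)) l x := by
    intro x hx
    have hmem := hΩ.mem_nhds hx
    have hφdiff : DifferentiableAt ℝ (fun y => ψ y ^ 2 * A y ^ (-β)) x :=
      (hφglob.differentiable one_ne_zero) x
    have hVdiff : ∀ l, DifferentiableAt ℝ (fun y => A y * pderiv' u l y) x := fun l =>
      ((hVC l).differentiableOn one_ne_zero).differentiableAt hmem
    have hprod : ∀ l, pderiv' (fun y => (A y * pderiv' u l y) * (ψ y ^ 2 * A y ^ (-β))) l x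
        = (A x * pderiv' u l x) * pderiv' (fun y => ψ y ^ 2 * A y ^ (-β)) l x
          + (ψ x ^ 2 * A x ^ (-β)) * pderiv' (fun y => A y * pderiv' u l y) l x := by
      intro l
      have hf := fderiv_fun_mul (hVdiff l) hφdiff
      show (fderiv ℝ (fun y => (A y * pderiv' u l y) * (ψ y ^ 2 * A y ^ (-β))) x)
          (EuclideanSpace.single l 1) = _
      rw [hf]
      simp only [ContinuousLinearMap.add_apply, ContinuousLinearMap.smul_apply, smul_eq_mul]
      rfl
    have hdiv : divField A u x = ∑ l, pderiv' (fun y => A y * pderiv' u l y) l x := rfl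
    rw [hdiv, Finset.sum_mul, Finset.sum_mul, ← Finset.sum_sub_distrib]
    exact Finset.sum_congr rfl fun l _ => by rw [hprod l]; ring
  -- continuity / integrability of the sum of derivatives
  have hpcont : ∀ l, Continuous
      (fun x => pderiv' (fun y => (A y * pderiv' u l y) * (ψ y ^ 2 * A y ^ (-β))) l x) := by
    intro l
    simp only [pderiv']
    exact ((hhglob l).continuous_fderiv one_ne_zero).clm_apply continuous_const
  have hp0 : ∀ l, ∀ x ∉ tsupport ψ,
      pderiv' (fun y => (A y * pderiv' u l y) * (ψ y ^ 2 * A y ^ (-β))) l x = 0 :=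
    fun l x hx => pderiv'_eq_zero_of_nmem hKcl (hh0 l) hx l
  have hpint : ∀ l, Integrable
      (fun x => pderiv' (fun y => (A y * pderiv' u l y) * (ψ y ^ 2 * A y ^ (-β))) l x) :=
    fun l => (hpcont l).integrable_of_hasCompactSupport (HasCompactSupport.intro hψc (hp0 l))
  have hDHcont : Continuous (fun x =>
      ∑ l, pderiv' (fun y => (A y * pderiv' u l y) * (ψ y ^ 2 * A y ^ (-β))) l x) :=
    continuous_finset_sum _ fun l _ => hpcont l
  have hDH0 : ∀ x ∉ tsupport ψ,
      (∑ l, pderiv' (fun y => (A y * pderiv' u l y) * (ψ y ^ 2 * A y ^ (-β))) l x) = 0 :=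
    fun x hx => Finset.sum_eq_zero fun l _ => hp0 l x hx
  have hDHint : Integrable (fun x =>
      ∑ l, pderiv' (fun y => (A y * pderiv' u l y) * (ψ y ^ 2 * A y ^ (-β))) l x) :=
    hDHcont.integrable_of_hasCompactSupport (HasCompactSupport.intro hψc hDH0)
  -- continuity / integrability of G
  have hφpcont : ∀ l, Continuous (fun x => pderiv' (fun y => ψ y ^ 2 * A y ^ (-β)) l x) := by
    intro l
    simp only [pderiv']
    exact (hφglob.continuous_fderiv one_ne_zero).clm_apply continuous_const
  have hφp0 : ∀ l, ∀ x ∉ tsupport ψ, pderiv' (fun y => ψ y ^ 2 * A y ^ (-β)) l x = 0 :=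
    fun l x hx => pderiv'_eq_zero_of_nmem hKcl hφ0 hx l
  have hGcont : Continuous (fun x =>
      ∑ l, A x * pderiv' u l x * pderiv' (fun y => ψ y ^ 2 * A y ^ (-β)) l x) := by
    apply continuous_of_continuousOn_of_zero hΩ hKcl hψΩ
    · exact continuousOn_finset_sum _ fun l _ =>
        ((hA.continuousOn.mul (huj l).continuousOn).mul (hφpcont l).continuousOn)
    · exact fun x hx => Finset.sum_eq_zero fun l _ => by rw [hφp0 l x hx, mul_zero]
  have hG0 : ∀ x ∉ tsupport ψ,
      (∑ l, A x * pderiv' u l x * pderiv' (fun y => ψ y ^ 2 * A y ^ (-β)) l x) = 0 :=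
    fun x hx => Finset.sum_eq_zero fun l _ => by rw [hφp0 l x hx, mul_zero]
  have hGint : Integrable (fun x =>
      ∑ l, A x * pderiv' u l x * pderiv' (fun y => ψ y ^ 2 * A y ^ (-β)) l x) :=
    hGcont.integrable_of_hasCompactSupport (HasCompactSupport.intro hψc hG0)
  -- continuity / integrability of the four RHS integrands
  have hgsψcont : Continuous (gradSq ψ) := by
    show Continuous fun x => ∑ j, (fderiv ℝ ψ x (EuclideanSpace.single j 1)) ^ 2
    exact continuous_finset_sum _ fun j _ =>
      ((hψ1.continuous_fderiv one_ne_zero).clm_apply continuous_const).pow 2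
  have hgsψ0 : ∀ x ∉ tsupport ψ, gradSq ψ x = 0 := fun x hx =>
    Finset.sum_eq_zero fun j _ => by
      rw [pderiv'_eq_zero_of_nmem hKcl hψ0 hx j]; ring
  have hgsuC : ContinuousOn (gradSq u) Ω := by
    apply continuousOn_finset_sum
    exact fun j _ => ((huj j).continuousOn).pow 2
  have hsqgsC : ContinuousOn (fun x => Real.sqrt (gradSq u x)) Ω :=
    Real.continuous_sqrt.comp_continuousOn hgsuC
  have hhessC : ContinuousOn (hessSq u) Ω := by
    show ContinuousOn (fun x => ∑ i, ∑ j,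
      (fderiv ℝ (pderiv' u j) x (EuclideanSpace.single i 1)) ^ 2) Ω
    apply continuousOn_finset_sum
    intro i _
    apply continuousOn_finset_sum
    intro j _
    exact (((huj j).continuousOn_fderiv_of_isOpen hΩ le_rfl).clm_apply continuousOn_const).pow 2
  have hψ2cont : Continuous (fun x => ψ x ^ 2) := (hψ1.continuous).pow 2
  have hF1int : Integrable (fun x => A x ^ (1 - β) * Real.sqrt (gradSq u x) * gradSq ψ x) := by
    apply Continuous.integrable_of_hasCompactSupport
    · exact continuous_of_continuousOn_of_zero hΩ hKcl hψΩ
        (((hArC _).continuousOn.mul hsqgsC).mul hgsψcont.continuousOn)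
        (fun x hx => by rw [hgsψ0 x hx, mul_zero])
    · exact HasCompactSupport.intro hψc (fun x hx => by rw [hgsψ0 x hx, mul_zero])
  have hF2int : Integrable (fun x => A x ^ (1 - β) * Real.sqrt (gradSq u x) * ψ x ^ 2) := by
    apply Continuous.integrable_of_hasCompactSupport
    · exact continuous_of_continuousOn_of_zero hΩ hKcl hψΩ
        (((hArC _).continuousOn.mul hsqgsC).mul hψ2cont.continuousOn)
        (fun x hx => by rw [hψ0 x hx]; ring)
    · exact HasCompactSupport.intro hψc (fun x hx => by rw [hψ0 x hx]; ring)
  have hF3int : Integrable (fun x => ψ x ^ 2 * A x ^ (-β)) :=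
    hφglob.continuous.integrable_of_hasCompactSupport (HasCompactSupport.intro hψc hφ0)
  have hF4int : Integrable (fun x => A x ^ (2 - β) * hessSq u x * ψ x ^ 2) := by
    apply Continuous.integrable_of_hasCompactSupport
    · exact continuous_of_continuousOn_of_zero hΩ hKcl hψΩ
        (((hArC _).continuousOn.mul hhessC).mul hψ2cont.continuousOn)
        (fun x hx => by rw [hψ0 x hx]; ring)
    · exact HasCompactSupport.intro hψc (fun x hx => by rw [hψ0 x hx]; ring)
  -- the integral identity
  have hIeq : (∫ x in Ω, divField A u x * ψ x ^ 2 * A x ^ (-β))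
      = - ∫ x in Ω, (∑ l, A x * pderiv' u l x
          * pderiv' (fun y => ψ y ^ 2 * A y ^ (-β)) l x) := by
    rw [setIntegral_congr_fun hΩ.measurableSet hkeyid]
    rw [integral_sub hDHint.integrableOn hGint.integrableOn]
    have h2 : (∫ x in Ω,
        ∑ l, pderiv' (fun y => (A y * pderiv' u l y) * (ψ y ^ 2 * A y ^ (-β))) l x) = 0 := by
      rw [setIntegral_eq_integral_of_forall_compl_eq_zero
        (fun x hx => hDH0 x (fun hk => hx (hψΩ hk)))]
      rw [integral_finset_sum _ (fun l _ => hpint l)]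
      exact Finset.sum_eq_zero fun l _ => hIBP l
    rw [h2]; ring
  rw [hIeq, abs_neg]
  -- bound |∫ G| by the integral of the pointwise bound
  have hFsumint : Integrable (fun x =>
      A x ^ (1 - β) * Real.sqrt (gradSq u x) * gradSq ψ x
      + A x ^ (1 - β) * Real.sqrt (gradSq u x) * ψ x ^ 2
      + θ * |β| * (ψ x ^ 2 * A x ^ (-β))
      + (|β| * S ^ 2 / (4 * θ)) * (A x ^ (2 - β) * hessSq u x * ψ x ^ 2)) :=
    ((hF1int.add hF2int).add (hF3int.const_mul _)).add (hF4int.const_mul _)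
  have habs : |∫ x in Ω, (∑ l, A x * pderiv' u l x
        * pderiv' (fun y => ψ y ^ 2 * A y ^ (-β)) l x)|
      ≤ ∫ x in Ω, (A x ^ (1 - β) * Real.sqrt (gradSq u x) * gradSq ψ x
        + A x ^ (1 - β) * Real.sqrt (gradSq u x) * ψ x ^ 2
        + θ * |β| * (ψ x ^ 2 * A x ^ (-β))
        + (|β| * S ^ 2 / (4 * θ)) * (A x ^ (2 - β) * hessSq u x * ψ x ^ 2)) := by
    have hb := norm_integral_le_of_norm_le (μ := volume.restrict Ω)
      (f := fun x => (∑ l, A x * pderiv' u l x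
        * pderiv' (fun y => ψ y ^ 2 * A y ^ (-β)) l x))
      hFsumint.integrableOn
      (ae_restrict_of_forall_mem hΩ.measurableSet (fun x hx => by
        rw [Real.norm_eq_abs]
        exact pointwise_bound hS hθ
          (((hA.differentiableOn one_ne_zero).differentiableAt (hΩ.mem_nhds hx)).hasFDerivAt)
          (hApos x) (hψd x) (hkey x hx)))
    simpa [Real.norm_eq_abs] using hb
  refine habs.trans (le_of_eq ?_)
  have i1 : IntegrableOn (fun x => A x ^ (1 - β) * Real.sqrt (gradSq u x) * gradSq ψ x) Ω :=
    hF1int.integrableOn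
  have i2 : IntegrableOn (fun x => A x ^ (1 - β) * Real.sqrt (gradSq u x) * ψ x ^ 2) Ω :=
    hF2int.integrableOn
  have i3 : IntegrableOn (fun x => θ * |β| * (ψ x ^ 2 * A x ^ (-β))) Ω :=
    (hF3int.const_mul (θ * |β|)).integrableOn
  have i4 : IntegrableOn
      (fun x => (|β| * S ^ 2 / (4 * θ)) * (A x ^ (2 - β) * hessSq u x * ψ x ^ 2)) Ω :=
    (hF4int.const_mul (|β| * S ^ 2 / (4 * θ))).integrableOn
  have i12 : IntegrableOn (fun x => A x ^ (1 - β) * Real.sqrt (gradSq u x) * gradSq ψ x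
      + A x ^ (1 - β) * Real.sqrt (gradSq u x) * ψ x ^ 2) Ω := i1.add i2
  have i123 : IntegrableOn (fun x => A x ^ (1 - β) * Real.sqrt (gradSq u x) * gradSq ψ x
      + A x ^ (1 - β) * Real.sqrt (gradSq u x) * ψ x ^ 2
      + θ * |β| * (ψ x ^ 2 * A x ^ (-β))) Ω := i12.add i3
  rw [integral_add i123 i4, integral_add i12 i3, integral_add i1 i2,
    integral_const_mul, integral_const_mul]

/-- interior case of Lemma 5.1 of the paper, with explicit constants.
With `a_ε(t) = â(√(ε+t²))`, `|t â'(t)| ≤ S â(t)`, `u ∈ C²(Ω)`, `β ∈ ℝ`, `θ > 0`,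
`ψ ∈ C_c^∞` supported in `Ω`:
`|∫_Ω div(a_ε(|∇u|)∇u) ψ² a_ε(|∇u|)^{−β}| ≤ ∫_Ω a_ε(|∇u|)^{1−β}|∇u||∇ψ|²
 + ∫_Ω a_ε(|∇u|)^{1−β}|∇u|ψ² + θ|β|∫_Ω ψ² a_ε(|∇u|)^{−β}
 + (|β|S²/(4θ))∫_Ω a_ε(|∇u|)^{2−β}|D²u|²ψ²`. -/
theorem stmt_15 (n : ℕ) (hn : 1 ≤ n) (S : ℝ) (hS : 0 ≤ S)
    (ahat ahat' : ℝ → ℝ)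
    (hpos : ∀ t, 0 < t → 0 < ahat t)
    (hderiv : ∀ t, 0 < t → HasDerivAt ahat (ahat' t) t)
    (h'cont : ContinuousOn ahat' (Set.Ioi 0))
    (hbd : ∀ t, 0 < t → |t * ahat' t| ≤ S * ahat t)
    (ε : ℝ) (hε : 0 < ε)
    (Ω : Set (EuclideanSpace ℝ (Fin n))) (hΩ : IsOpen Ω)
    (u : EuclideanSpace ℝ (Fin n) → ℝ) (hu : ContDiffOn ℝ 2 u Ω)
    (β : ℝ) (θ : ℝ) (hθ : 0 < θ)
    (ψ : EuclideanSpace ℝ (Fin n) → ℝ)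
    (hψ : ContDiff ℝ (⊤ : ℕ∞) ψ) (hψc : HasCompactSupport ψ) (hψΩ : tsupport ψ ⊆ Ω) :
    |∫ x in Ω, divField (fun y => ahat (Real.sqrt (ε + gradSq u y))) u x
        * ψ x ^ 2 * ahat (Real.sqrt (ε + gradSq u x)) ^ (-β)|
      ≤ (∫ x in Ω, ahat (Real.sqrt (ε + gradSq u x)) ^ (1 - β)
            * Real.sqrt (gradSq u x) * gradSq ψ x)
        + (∫ x in Ω, ahat (Real.sqrt (ε + gradSq u x)) ^ (1 - β)
            * Real.sqrt (gradSq u x) * ψ x ^ 2)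
        + θ * |β| * (∫ x in Ω, ψ x ^ 2 * ahat (Real.sqrt (ε + gradSq u x)) ^ (-β))
        + (|β| * S ^ 2 / (4 * θ)) *
            (∫ x in Ω, ahat (Real.sqrt (ε + gradSq u x)) ^ (2 - β)
              * hessSq u x * ψ x ^ 2) := by
  have hgsnn : ∀ x, 0 ≤ gradSq u x := gradSq_nonneg u
  have hepos : ∀ x, 0 < ε + gradSq u x := fun x => by linarith [hgsnn x]
  have htpos : ∀ x, 0 < Real.sqrt (ε + gradSq u x) := fun x => Real.sqrt_pos.2 (hepos x)
  have hApos : ∀ x, 0 < ahat (Real.sqrt (ε + gradSq u x)) := fun x => hpos _ (htpos x)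
  have huj := contDiffOn_pderiv' hΩ hu
  -- regularity of A
  have hgsC : ContDiffOn ℝ 1 (gradSq u) Ω := by
    show ContDiffOn ℝ 1 (fun x => ∑ j, (pderiv' u j x) ^ 2) Ω
    exact ContDiffOn.sum fun j _ => (huj j).pow 2
  have htC : ContDiffOn ℝ 1 (fun x => Real.sqrt (ε + gradSq u x)) Ω := by
    intro x hx
    exact (Real.contDiffAt_sqrt (hepos x).ne').comp_contDiffWithinAt x
      (contDiffWithinAt_const.add (hgsC x hx))
  have hA : ContDiffOn ℝ 1 (fun x => ahat (Real.sqrt (ε + gradSq u x))) Ω :=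
    (contDiffOn_ahat hderiv h'cont).comp htC (fun x _ => Set.mem_Ioi.2 (htpos x))
  -- the key gradient bound
  have hkey : ∀ x ∈ Ω, |∑ l, pderiv' u l x
        * pderiv' (fun y => ahat (Real.sqrt (ε + gradSq u y))) l x|
      ≤ S * ahat (Real.sqrt (ε + gradSq u x)) * Real.sqrt (hessSq u x) := by
    intro x hx
    set t := Real.sqrt (ε + gradSq u x) with ht_def
    have hmem := hΩ.mem_nhds hx
    have hduj : ∀ j, HasFDerivAt (pderiv' u j) (fderiv ℝ (pderiv' u j) x) x := fun j =>
      (((huj j).differentiableOn one_ne_zero).differentiableAt hmem).hasFDerivAt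
    have hgsd : HasFDerivAt (gradSq u)
        (∑ j, (pderiv' u j x • fderiv ℝ (pderiv' u j) x
          + pderiv' u j x • fderiv ℝ (pderiv' u j) x)) x := by
      have h := HasFDerivAt.sum (fun j (_ : j ∈ Finset.univ) => (hduj j).mul (hduj j))
      rw [show gradSq u = (fun y => ∑ j, pderiv' u j y * pderiv' u j y) from
        funext fun y => Finset.sum_congr rfl fun j _ => sq (pderiv' u j y)]
      exact h.congr_of_eventuallyEq (Filter.Eventually.of_forall fun y => by simp [Finset.sum_apply])
    have htd : HasFDerivAt (fun y => Real.sqrt (ε + gradSq u y))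
        ((1 / (2 * t)) • ∑ j, (pderiv' u j x • fderiv ℝ (pderiv' u j) x
          + pderiv' u j x • fderiv ℝ (pderiv' u j) x)) x :=
      (Real.hasDerivAt_sqrt (hepos x).ne').comp_hasFDerivAt x (hgsd.const_add ε)
    have hAd : HasFDerivAt (fun y => ahat (Real.sqrt (ε + gradSq u y)))
        (ahat' t • ((1 / (2 * t)) • ∑ j, (pderiv' u j x • fderiv ℝ (pderiv' u j) x
          + pderiv' u j x • fderiv ℝ (pderiv' u j) x))) x :=
      (hderiv t (htpos x)).comp_hasFDerivAt x htd
    have hval : ∀ l, pderiv' (fun y => ahat (Real.sqrt (ε + gradSq u y))) l x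
        = ahat' t * ((1 / (2 * t)) * (∑ j, (pderiv' u j x * pderiv' (pderiv' u j) l x
            + pderiv' u j x * pderiv' (pderiv' u j) l x))) := by
      intro l
      show (fderiv ℝ (fun y => ahat (Real.sqrt (ε + gradSq u y))) x)
        (EuclideanSpace.single l 1) = _
      rw [hAd.fderiv]
      simp only [ContinuousLinearMap.smul_apply, ContinuousLinearMap.coe_sum',
        Finset.sum_apply, ContinuousLinearMap.add_apply, smul_eq_mul]
      rfl
    -- rewrite the sum
    have hT : (∑ l, pderiv' u l x
          * pderiv' (fun y => ahat (Real.sqrt (ε + gradSq u y))) l x)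
        = (ahat' t / t) * ∑ l, pderiv' u l x
            * (∑ j, pderiv' u j x * pderiv' (pderiv' u j) l x) := by
      rw [Finset.mul_sum]
      refine Finset.sum_congr rfl fun l _ => ?_
      rw [hval l]
      have h2 : (∑ j, (pderiv' u j x * pderiv' (pderiv' u j) l x
          + pderiv' u j x * pderiv' (pderiv' u j) l x))
        = 2 * ∑ j, pderiv' u j x * pderiv' (pderiv' u j) l x := by
        rw [Finset.sum_add_distrib, two_mul]
      rw [h2]
      field_simp
    -- Cauchy-Schwarz
    have hw : ∀ l, (∑ j, pderiv' u j x * pderiv' (pderiv' u j) l x) ^ 2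
        ≤ gradSq u x * (∑ j, (pderiv' (pderiv' u j) l x) ^ 2) := by
      intro l
      have := Finset.sum_mul_sq_le_sq_mul_sq Finset.univ
        (fun j => pderiv' u j x) (fun j => pderiv' (pderiv' u j) l x)
      simpa [gradSq] using this
    have hsum2 : (∑ l, (∑ j, pderiv' u j x * pderiv' (pderiv' u j) l x) ^ 2)
        ≤ gradSq u x * hessSq u x := by
      calc (∑ l, (∑ j, pderiv' u j x * pderiv' (pderiv' u j) l x) ^ 2)
          ≤ ∑ l, gradSq u x * (∑ j, (pderiv' (pderiv' u j) l x) ^ 2) :=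
            Finset.sum_le_sum fun l _ => hw l
        _ = gradSq u x * hessSq u x := by rw [← Finset.mul_sum]; rfl
    have hCS : |∑ l, pderiv' u l x * (∑ j, pderiv' u j x * pderiv' (pderiv' u j) l x)|
        ≤ gradSq u x * Real.sqrt (hessSq u x) := by
      have h1 := Finset.sum_mul_sq_le_sq_mul_sq Finset.univ
        (fun l => pderiv' u l x)
        (fun l => ∑ j, pderiv' u j x * pderiv' (pderiv' u j) l x)
      have h2 : (∑ l, pderiv' u l x * (∑ j, pderiv' u j x * pderiv' (pderiv' u j) l x)) ^ 2
          ≤ gradSq u x * (gradSq u x * hessSq u x) := by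
        calc (∑ l, pderiv' u l x * (∑ j, pderiv' u j x * pderiv' (pderiv' u j) l x)) ^ 2
            ≤ (∑ l, (pderiv' u l x) ^ 2)
              * ∑ l, (∑ j, pderiv' u j x * pderiv' (pderiv' u j) l x) ^ 2 := h1
          _ ≤ gradSq u x * (gradSq u x * hessSq u x) := by
              have : (∑ l, (pderiv' u l x) ^ 2) = gradSq u x := rfl
              rw [this]
              exact mul_le_mul_of_nonneg_left hsum2 (hgsnn x)
      calc |∑ l, pderiv' u l x * (∑ j, pderiv' u j x * pderiv' (pderiv' u j) l x)|
          = Real.sqrt ((∑ l, pderiv' u l x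
              * (∑ j, pderiv' u j x * pderiv' (pderiv' u j) l x)) ^ 2) :=
            (Real.sqrt_sq_eq_abs _).symm
        _ ≤ Real.sqrt (gradSq u x * (gradSq u x * hessSq u x)) := Real.sqrt_le_sqrt h2
        _ = gradSq u x * Real.sqrt (hessSq u x) := by
            rw [show gradSq u x * (gradSq u x * hessSq u x)
                = (gradSq u x) ^ 2 * hessSq u x by ring,
              Real.sqrt_mul (sq_nonneg _), Real.sqrt_sq (hgsnn x)]
    -- conclude
    rw [hT, abs_mul]
    have hb := hbd t (htpos x)
    have habs : |ahat' t / t| = |ahat' t| / t := by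
      rw [abs_div, abs_of_pos (htpos x)]
    have htsq : t ^ 2 = ε + gradSq u x := Real.sq_sqrt (hepos x).le
    have hgs_le : gradSq u x ≤ t ^ 2 := by rw [htsq]; linarith
    have hta : |t * ahat' t| = t * |ahat' t| := by
      rw [abs_mul, abs_of_pos (htpos x)]
    rw [habs]
    calc |ahat' t| / t * |∑ l, pderiv' u l x
          * (∑ j, pderiv' u j x * pderiv' (pderiv' u j) l x)|
        ≤ |ahat' t| / t * (gradSq u x * Real.sqrt (hessSq u x)) :=
          mul_le_mul_of_nonneg_left hCS (by positivity)
      _ = (|ahat' t| / t * gradSq u x) * Real.sqrt (hessSq u x) := by ring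
      _ ≤ (S * ahat t) * Real.sqrt (hessSq u x) := by
          apply mul_le_mul_of_nonneg_right _ (Real.sqrt_nonneg _)
          rw [div_mul_eq_mul_div, div_le_iff₀ (htpos x)]
          nlinarith [hb, hgs_le, abs_nonneg (ahat' t), htpos x, hta,
            hpos t (htpos x)]
      _ = S * ahat t * Real.sqrt (hessSq u x) := rfl
  exact main_ineq S θ β hS hθ hΩ hu hA hApos hkey hψ hψc hψΩ
end
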